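/- arXiv:math/0206150 — 9 statements merged into one kernel-verified Lean document; each statement's English description precedes it below -/
import Mathlib

section
/- For a Parrondo mod-m random walk G(m, p, p') (steps +1 with probability p' and −1 with probability q' = 1−p' when the current state is divisible by m, and +1 with probability p, −1 with probability q = 1−p otherwise), with |p − p'| < 1 and p, p' ∈ (0,1), the embedded walk on mℤ (recording ±1 according to whether the walk moves up or down by m between successive visits to mℤ) is a simple random walk with success probability p*_m = p'·p^{m−1} / (p'·p^{m−1} + q'·q^{m−1}). -/
/-!
Away from `mℤ` the recurrence says `p (u (j+1) - u j) = q (u j - u (j-1))`, so on each of the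
blocks `[-m, 0]` and `[0, m]` the increments of `u` form a geometric progression with ratio
`r = q / p`. Both blocks therefore rise by the same factor `S = ∑_{k<m} r^k` times their first
increment: `u 0 = S dₗ` and `1 - u 0 = S dᵣ`. The last increment of the left block is
`r^(m-1) dₗ`, and the recurrence at `0` links it to the first increment of the right block,
`p' dᵣ = q' r^(m-1) dₗ`. Hence `p' (1 - u 0) = q' r^(m-1) u 0`; multiply by `p^(m-1)`.
-/

open Finset

section GeometricIncrements

variable {u : ℤ → ℝ} {r : ℝ} {a : ℤ} {n : ℕ}

lemma sub_eq_pow_mul_of_increment_ratio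
    (h : ∀ j, a < j → j < a + n → u (j + 1) - u j = r * (u j - u (j - 1))) :
    ∀ k < n, u (a + k + 1) - u (a + k) = r ^ k * (u (a + 1) - u a) := by
  intro k hk
  induction k with
  | zero => simp
  | succ k ih =>
    have hstep := h (a + k + 1) (by omega) (by omega)
    rw [add_sub_cancel_right, ih (by omega)] at hstep
    push_cast
    rw [← add_assoc, hstep, pow_succ]
    ring

lemma sub_eq_geom_sum_mul_of_increment_ratio
    (h : ∀ j, a < j → j < a + n → u (j + 1) - u j = r * (u j - u (j - 1))) :
    u (a + n) - u a = (∑ k ∈ range n, r ^ k) * (u (a + 1) - u a) := by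
  have htelescope := Finset.sum_range_sub (fun k : ℕ => u (a + k)) n
  push_cast at htelescope
  rw [add_zero] at htelescope
  rw [← htelescope, Finset.sum_mul]
  refine Finset.sum_congr rfl fun k hk => ?_
  rw [← add_assoc, sub_eq_pow_mul_of_increment_ratio h k (mem_range.1 hk)]

lemma last_sub_eq_pow_mul_of_increment_ratio (hn : 0 < n)
    (h : ∀ j, a < j → j < a + n → u (j + 1) - u j = r * (u j - u (j - 1))) :
    u (a + n) - u (a + n - 1) = r ^ (n - 1) * (u (a + 1) - u a) := by
  have := sub_eq_pow_mul_of_increment_ratio h (n - 1) (by omega)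
  rwa [Nat.cast_sub hn, Nat.cast_one, add_sub_assoc', sub_add_cancel] at this

end GeometricIncrements

lemma increment_ratio_of_harmonic {u : ℤ → ℝ} {p : ℝ} (hp : p ≠ 0) {j : ℤ}
    (h : u j = p * u (j + 1) + (1 - p) * u (j - 1)) :
    u (j + 1) - u j = (1 - p) / p * (u j - u (j - 1)) := by
  field_simp
  linear_combination -h

lemma increment_ratio_of_parrondo {m : ℕ} {p p' : ℝ} (hp : p ≠ 0) {u : ℤ → ℝ}
    (hrec : ∀ j : ℤ, -(m : ℤ) < j → j < m →
      u j = (if (m : ℤ) ∣ j then p' else p) * u (j + 1)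
          + (if (m : ℤ) ∣ j then 1 - p' else 1 - p) * u (j - 1))
    (j : ℤ) (hj0 : j ≠ 0) (hjm : |j| < m) :
    u (j + 1) - u j = (1 - p) / p * (u j - u (j - 1)) := by
  have hndvd : ¬ (m : ℤ) ∣ j := fun hdvd => hj0 (Int.eq_zero_of_abs_lt_dvd hdvd hjm)
  have h := hrec j (neg_lt_of_abs_lt hjm) (lt_of_abs_lt hjm)
  rw [if_neg hndvd, if_neg hndvd] at h
  exact increment_ratio_of_harmonic hp h

theorem stmt_1_general (m : ℕ) (hm : 2 ≤ m) (p p' : ℝ)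
    (hp : p ∈ Set.Ioo (0:ℝ) 1) (hp' : p' ∈ Set.Ioo (0:ℝ) 1)
    (u : ℤ → ℝ) (hbot : u (-(m : ℤ)) = 0) (htop : u m = 1)
    (hrec : ∀ j : ℤ, -(m : ℤ) < j → j < m →
      u j = (if (m : ℤ) ∣ j then p' else p) * u (j + 1)
          + (if (m : ℤ) ∣ j then 1 - p' else 1 - p) * u (j - 1)) :
    u 0 = p' * p ^ (m - 1) / (p' * p ^ (m - 1) + (1 - p') * (1 - p) ^ (m - 1)) := by
  obtain ⟨hp0, hp1⟩ := hp
  obtain ⟨hp'0, hp'1⟩ := hp'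
  set r := (1 - p) / p
  set S := ∑ k ∈ range m, r ^ k
  have hratio := increment_ratio_of_parrondo hp0.ne' hrec
  have hleft : ∀ j, -(m : ℤ) < j → j < -m + m → u (j + 1) - u j = r * (u j - u (j - 1)) :=
    fun j h1 h2 => hratio j (by omega) (abs_lt.2 ⟨h1, by omega⟩)
  have hright : ∀ j, (0 : ℤ) < j → j < 0 + m → u (j + 1) - u j = r * (u j - u (j - 1)) :=
    fun j h1 h2 => hratio j h1.ne' (abs_lt.2 ⟨by omega, by omega⟩)
  have hL : u 0 = S * (u (-m + 1) - u (-m)) := by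
    simpa [hbot] using sub_eq_geom_sum_mul_of_increment_ratio hleft
  have hR : 1 - u 0 = S * (u 1 - u 0) := by
    simpa [htop] using sub_eq_geom_sum_mul_of_increment_ratio hright
  have hL_last : u 0 - u (-1) = r ^ (m - 1) * (u (-m + 1) - u (-m)) := by
    simpa using last_sub_eq_pow_mul_of_increment_ratio (by omega) hleft
  have hzero : p' * (u 1 - u 0) = (1 - p') * (u 0 - u (-1)) := by
    have h := hrec 0 (by omega) (by omega)
    simp only [dvd_zero, if_true, zero_add, zero_sub] at h
    linear_combination -h
  have hr_pow : p ^ (m - 1) * r ^ (m - 1) = (1 - p) ^ (m - 1) := by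
    rw [← mul_pow, mul_div_cancel₀ _ hp0.ne']
  have hden : 0 < p' * p ^ (m - 1) + (1 - p') * (1 - p) ^ (m - 1) := by
    have : 0 < 1 - p := by linarith
    have : 0 < 1 - p' := by linarith
    positivity
  rw [eq_div_iff hden.ne', ← hr_pow]
  linear_combination (-p' * p ^ (m - 1)) * hR - (p ^ (m - 1) * S) * hzero
    - ((1 - p') * p ^ (m - 1) * S) * hL_last + ((1 - p') * p ^ (m - 1) * r ^ (m - 1)) * hL

/-- For the Parrondo mod-m walk `G(m, p, p')` (up-probability `p'` at states
divisible by `m`, `p` elsewhere), the function `u j` = probability of hitting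
`m` before `-m` starting from `j` satisfies the harmonic equations below, and
the success probability of the embedded walk on `mℤ`, namely `u 0`, equals
`p' p^{m-1} / (p' p^{m-1} + q' q^{m-1})`. -/
theorem stmt_1 (m : ℕ) (hm : 2 ≤ m) (p p' : ℝ)
    (hp : p ∈ Set.Ioo (0:ℝ) 1) (hp' : p' ∈ Set.Ioo (0:ℝ) 1)
    (hdiff : |p - p'| < 1)
    (u : ℤ → ℝ) (hbot : u (-(m : ℤ)) = 0) (htop : u m = 1)
    (hrec : ∀ j : ℤ, -(m : ℤ) < j → j < m →
      u j = (if (m : ℤ) ∣ j then p' else p) * u (j + 1)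
          + (if (m : ℤ) ∣ j then 1 - p' else 1 - p) * u (j - 1)) :
    u 0 = p' * p ^ (m - 1) / (p' * p ^ (m - 1) + (1 - p') * (1 - p) ^ (m - 1)) :=
  stmt_1_general m hm p p' hp hp' u hbot htop hrec
end

section
/- For a mod-m random walk with transition probabilities p_j, q_j (p_j q_j ≠ 0), the probability p*_m that the walk started at 0 reaches m before −m equals ρ_m/(1 + ρ_m), where ρ_m = (p_0 p_1 ⋯ p_{m−1})/(q_0 q_1 ⋯ q_{m−1}). -/
/-!
The increments `d j = u (j + 1) - u j` of a harmonic function satisfy `p j d j = q j d (j - 1)`,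
so `d` is multiplied by `q j / p j` at each step. By periodicity, `m` consecutive steps multiply it
by the same factor `ρ⁻¹ = ∏ q j / ∏ p j` wherever they start; hence the increments over `[0, m]`
are `ρ⁻¹` times those over `[-m, 0]`, i.e. `1 - u 0 = ρ⁻¹ u 0`.
-/

open Finset Function

section

variable {M : Type*} [CommMonoid M]

theorem Function.Periodic.prod_range_add_one {f : ℤ → M} {m : ℕ} (hf : Periodic f m) (a : ℤ) :
    ∏ i ∈ range m, f (a + 1 + i) = ∏ i ∈ range m, f (a + i) := by
  cases m with
  | zero => simp
  | succ n =>
    rw [prod_range_succ, prod_range_succ', Nat.cast_zero, add_zero,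
      show a + 1 + n = a + (n + 1 : ℕ) by push_cast; ring, hf a]
    congr 1
    refine prod_congr rfl fun i _ => ?_
    push_cast
    ring_nf

theorem Function.Periodic.prod_range_add {f : ℤ → M} {m : ℕ} (hf : Periodic f m) (a : ℤ) :
    ∏ i ∈ range m, f (a + i) = ∏ i ∈ range m, f i := by
  have hwindow : Periodic (fun a : ℤ => ∏ i ∈ range m, f (a + i)) 1 := hf.prod_range_add_one
  simpa using hwindow.int_mul_eq a

theorem apply_add_eq_prod_range_mul {r d : ℤ → M} {a : ℤ} {k : ℕ}
    (h : ∀ i < k, d (a + 1 + i) = r (a + 1 + i) * d (a + i)) :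
    d (a + k) = (∏ i ∈ range k, r (a + 1 + i)) * d a := by
  induction k with
  | zero => simp
  | succ k ih =>
    rw [prod_range_succ, mul_right_comm, ← ih fun i hi => h i (by omega),
      mul_comm, ← h k (by omega)]
    push_cast
    ring_nf

end

theorem sum_range_sub_int_add {G : Type*} [AddCommGroup G] (u : ℤ → G) (b : ℤ) (n : ℕ) :
    ∑ i ∈ range n, (u (b + i + 1) - u (b + i)) = u (b + n) - u b := by
  simpa [add_assoc] using sum_range_sub (fun i : ℕ => u (b + i)) n

theorem stmt_4_general (m : ℕ) (p q : ℤ → ℝ)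
    (hp : ∀ j, 0 < p j) (hq : ∀ j, 0 < q j)
    (hpper : ∀ j, p (j + m) = p j) (hqper : ∀ j, q (j + m) = q j)
    (u : ℤ → ℝ) (hbot : u (-(m : ℤ)) = 0) (htop : u m = 1)
    (hrec : ∀ j : ℤ, -(m : ℤ) < j → j < m →
      u j = p j * u (j + 1) + q j * u (j - 1) + (1 - p j - q j) * u j) :
    u 0 = ((∏ j ∈ Finset.range m, p j) / (∏ j ∈ Finset.range m, q j)) /
      (1 + (∏ j ∈ Finset.range m, p j) / (∏ j ∈ Finset.range m, q j)) := by
  set r : ℤ → ℝ := fun j => q j / p j with hr_def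
  set d : ℤ → ℝ := fun j => u (j + 1) - u j with hd_def
  have hr : Periodic r m := fun j => by simp only [hr_def, hpper, hqper]
  have hstep : ∀ j, -(m : ℤ) ≤ j → j + 1 < m → d (j + 1) = r (j + 1) * d j := by
    intro j hj₁ hj₂
    have h := hrec (j + 1) (by omega) (by omega)
    simp only [hd_def, hr_def, add_sub_cancel_right] at h ⊢
    field_simp [(hp (j + 1)).ne']
    linear_combination -h
  have hshift : ∀ i ∈ range m, d (0 + i) = (∏ j ∈ range m, r j) * d (-m + i) := by
    intro i hi
    rw [mem_range] at hi
    have hperiod := apply_add_eq_prod_range_mul (d := d) (a := -m + i) (k := m) fun k hk => by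
      rw [add_right_comm]
      exact hstep _ (by omega) (by omega)
    rwa [hr.prod_range_add, show -(m : ℤ) + i + m = 0 + i by ring] at hperiod
  have hincr := sum_range_sub_int_add u 0 m
  rw [sum_congr rfl hshift, ← mul_sum, sum_range_sub_int_add, neg_add_cancel, zero_add, hbot,
    htop, sub_zero, hr_def, prod_div_distrib] at hincr
  have hP : 0 < ∏ j ∈ range m, p j := prod_pos fun j _ => hp j
  have hQ : 0 < ∏ j ∈ range m, q j := prod_pos fun j _ => hq j
  field_simp at hincr ⊢
  linear_combination hincr

/-- For a mod-m random walk with parameters `p j`, `q j` (periodic mod `m`,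
`p j q j ≠ 0`, `p j + q j ≤ 1`), the probability `u 0` of hitting `m` before
`-m` starting from `0` (characterized by the harmonic equations with boundary
values `u (-m) = 0`, `u m = 1`) equals `ρ_m/(1 + ρ_m)` with
`ρ_m = (p_0 ⋯ p_{m-1})/(q_0 ⋯ q_{m-1})`. -/
theorem stmt_4 (m : ℕ) (hm : 1 ≤ m) (p q : ℤ → ℝ)
    (hp : ∀ j, 0 < p j) (hq : ∀ j, 0 < q j) (hpq : ∀ j, p j + q j ≤ 1)
    (hpper : ∀ j, p (j + m) = p j) (hqper : ∀ j, q (j + m) = q j)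
    (u : ℤ → ℝ) (hbot : u (-(m : ℤ)) = 0) (htop : u m = 1)
    (hrec : ∀ j : ℤ, -(m : ℤ) < j → j < m →
      u j = p j * u (j + 1) + q j * u (j - 1) + (1 - p j - q j) * u j) :
    u 0 = ((∏ j ∈ Finset.range m, p j) / (∏ j ∈ Finset.range m, q j)) /
      (1 + (∏ j ∈ Finset.range m, p j) / (∏ j ∈ Finset.range m, q j)) :=
  stmt_4_general m p q hp hq hpper hqper u hbot htop hrec
end

section
/- Let v_m be the probability that a mod-m random walk started at 1 reaches m before reaching 0, and let v̄_m be the probability that the walk started at m−1 reaches 0 before reaching m. Then v_m / v̄_m = (p_1 p_2 ⋯ p_{m−1})/(q_1 q_2 ⋯ q_{m−1}). -/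
/-!
Rewriting the harmonic equation as `p_j (x_{j+1} - x_j) = q_j (x_j - x_{j-1})` shows that the
increments of any solution are `ρ_k (x_1 - x_0)`, where `ρ_k = ∏_{j ≤ k} q_j / p_j`.
Summing the increments over `[0, m)` gives `S u_1 = 1` and `S (1 - w_1) = 1` with
`S = ∑_{k < m} ρ_k`, so `u_1 = 1 - w_1`; the last increment of `w` then reads
`w_{m-1} = ρ_{m-1} (1 - w_1) = ρ_{m-1} u_1`.
-/

open Finset

section HarmonicSequence

variable {K : Type*} [Field K] (p q : ℤ → K)

def oddsProduct (k : ℕ) : K := ∏ j ∈ Icc 1 k, q j / p j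

variable {p q}

theorem oddsProduct_inv (k : ℕ) :
    (oddsProduct p q k)⁻¹ = (∏ j ∈ Icc 1 k, p j) / ∏ j ∈ Icc 1 k, q j := by
  rw [oddsProduct, prod_div_distrib, inv_div]

variable (hp : ∀ j, p j ≠ 0) (hpq : ∀ j, p j + q j = 1) {m : ℕ} {x : ℤ → K}
  (hx : ∀ j : ℤ, 0 < j → j < m → x j = p j * x (j + 1) + q j * x (j - 1))
include hp hpq hx

theorem sub_eq_oddsProduct_mul {k : ℕ} (hk : k < m) :
    x (k + 1) - x k = oddsProduct p q k * (x 1 - x 0) := by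
  induction k with
  | zero => simp [oddsProduct]
  | succ k ih =>
    have hj := hx (k + 1) (by positivity) (by exact_mod_cast hk)
    have step : p (k + 1) * (x (k + 1 + 1) - x (k + 1)) = q (k + 1) * (x (k + 1) - x k) := by
      rw [add_sub_cancel_right] at hj
      linear_combination -hj - x (k + 1) * hpq (k + 1)
    rw [oddsProduct, prod_Icc_succ_top (by omega), ← oddsProduct, mul_comm _ (q _ / p _),
      mul_assoc, ← ih (by omega), div_mul_eq_mul_div, eq_div_iff (hp _)]
    push_cast
    linear_combination step

theorem sub_zero_eq_sum_oddsProduct_mul {n : ℕ} (hn : n ≤ m) :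
    x n - x 0 = (∑ k ∈ range n, oddsProduct p q k) * (x 1 - x 0) := by
  rw [sum_mul, ← Nat.cast_zero, ← sum_range_sub (fun k : ℕ => x k)]
  refine sum_congr rfl fun k hk => ?_
  push_cast
  exact sub_eq_oddsProduct_mul hp hpq hx (by simp at hk; omega)

end HarmonicSequence

theorem stmt_5_general (m : ℕ) (hm : 2 ≤ m) (p q : ℤ → ℝ)
    (hp : ∀ j, 0 < p j) (hpq : ∀ j, p j + q j = 1)
    (u : ℤ → ℝ) (hu0 : u 0 = 0) (hum : u m = 1)
    (hurec : ∀ j : ℤ, 0 < j → j < m → u j = p j * u (j + 1) + q j * u (j - 1))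
    (w : ℤ → ℝ) (hw0 : w 0 = 1) (hwm : w m = 0)
    (hwrec : ∀ j : ℤ, 0 < j → j < m → w j = p j * w (j + 1) + q j * w (j - 1)) :
    u 1 / w ((m : ℤ) - 1) =
      (∏ j ∈ Finset.Icc 1 (m - 1), p j) / (∏ j ∈ Finset.Icc 1 (m - 1), q j) := by
  have hp0 : ∀ j, p j ≠ 0 := fun j => (hp j).ne'
  set S := ∑ k ∈ range m, oddsProduct p q k
  have hu : S * u 1 = 1 := by
    have := sub_zero_eq_sum_oddsProduct_mul hp0 hpq hurec le_rfl
    rw [hum, hu0] at this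
    linear_combination -this
  have hw : S * (1 - w 1) = 1 := by
    have := sub_zero_eq_sum_oddsProduct_mul hp0 hpq hwrec le_rfl
    rw [hwm, hw0] at this
    linear_combination this
  have hw_last : w (m - 1) = oddsProduct p q (m - 1) * (1 - w 1) := by
    have := sub_eq_oddsProduct_mul hp0 hpq hwrec (k := m - 1) (by omega)
    rw [Nat.cast_sub (by omega), Nat.cast_one, sub_add_cancel, hwm, hw0] at this
    linear_combination -this
  have hu1 : 1 - w 1 = u 1 :=
    mul_left_cancel₀ (left_ne_zero_of_mul_eq_one hu) (by linear_combination hw - hu)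
  calc u 1 / w (m - 1) = (oddsProduct p q (m - 1))⁻¹ := by
        rw [hw_last, hu1, div_mul_cancel_right₀ (right_ne_zero_of_mul_eq_one hu)]
    _ = _ := oddsProduct_inv _

/-- For a mod-m random walk with `p j + q j = 1` and `p j q j ≠ 0`, let
`v_m = u 1` be the probability of reaching `m` before `0` from `1`, and
`v̄_m = w (m-1)` the probability of reaching `0` before `m` from `m-1`
(both characterized by the harmonic equations with the indicated boundary
values).  Then `v_m / v̄_m = (p_1 ⋯ p_{m-1})/(q_1 ⋯ q_{m-1})`. -/
theorem stmt_5 (m : ℕ) (hm : 2 ≤ m) (p q : ℤ → ℝ)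
    (hp : ∀ j, 0 < p j) (hq : ∀ j, 0 < q j) (hpq : ∀ j, p j + q j = 1)
    (hpper : ∀ j, p (j + m) = p j) (hqper : ∀ j, q (j + m) = q j)
    (u : ℤ → ℝ) (hu0 : u 0 = 0) (hum : u m = 1)
    (hurec : ∀ j : ℤ, 0 < j → j < m → u j = p j * u (j + 1) + q j * u (j - 1))
    (w : ℤ → ℝ) (hw0 : w 0 = 1) (hwm : w m = 0)
    (hwrec : ∀ j : ℤ, 0 < j → j < m → w j = p j * w (j + 1) + q j * w (j - 1)) :
    u 1 / w ((m : ℤ) - 1) =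
      (∏ j ∈ Finset.Icc 1 (m - 1), p j) / (∏ j ∈ Finset.Icc 1 (m - 1), q j) :=
  stmt_5_general m hm p q hp hpq u hu0 hum hurec w hw0 hwm hwrec
end

section
/- There is a probability-preserving bijection structure between first-hitting paths: for each k, path reversal gives a bijection between the set Γ_k of paths of length k+1 from 1 to m staying strictly between 0 and m before hitting m, and the set G_k of paths from m−1 to 0 staying strictly between 0 and m before hitting 0; moreover for every path s ∈ Γ_k, the ratio of the probability of s (under the mod-m walk) to the probability of its reversal equals (p_1 p_2 ⋯ p_{m−1})/(q_1 q_2 ⋯ q_{m−1}), independent of s and k. -/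
/-- Paths of length `k+1` from `1` to `m` staying in `{1,…,m-1}` before their
final step to `m` (encoded as functions `ℕ → ℤ`, padded by `0` outside the
index range `1,…,k+1`). -/
def gammaSet (m k : ℕ) : Set (ℕ → ℤ) :=
  {s | s 1 = 1 ∧ s (k + 1) = (m : ℤ) ∧
    (∀ i, 1 ≤ i → i ≤ k → 1 ≤ s i ∧ s i ≤ (m : ℤ) - 1) ∧
    (∀ i, 1 ≤ i → i ≤ k → s (i + 1) - s i = 1 ∨ s (i + 1) - s i = -1) ∧
    (∀ i, i = 0 ∨ k + 2 ≤ i → s i = 0)}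

/-- Paths of length `k+1` from `m-1` to `0` staying in `{1,…,m-1}` before their
final step to `0`. -/
def gSet (m k : ℕ) : Set (ℕ → ℤ) :=
  {t | t 1 = (m : ℤ) - 1 ∧ t (k + 1) = 0 ∧
    (∀ i, 1 ≤ i → i ≤ k → 1 ≤ t i ∧ t i ≤ (m : ℤ) - 1) ∧
    (∀ i, 1 ≤ i → i ≤ k → t (i + 1) - t i = 1 ∨ t (i + 1) - t i = -1) ∧
    (∀ i, i = 0 ∨ k + 2 ≤ i → t i = 0)}

/-- Reversal of a path: `(s_1, …, s_k, m) ↦ (s_k, …, s_1, 0)`. -/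
def revPath (k : ℕ) (s : ℕ → ℤ) : ℕ → ℤ :=
  fun i => if 1 ≤ i ∧ i ≤ k then s (k + 1 - i) else 0

/-- Probability of a path under the mod-m walk with up-probabilities `p` and
down-probabilities `1 - p`. -/
def pathProb (p : ℤ → ℝ) (k : ℕ) (s : ℕ → ℤ) : ℝ :=
  ∏ i ∈ Finset.Icc 1 k, (if s (i + 1) = s i + 1 then p (s i) else 1 - p (s i))

/-!
Reversal is a bijection because reversing a `±1` walk confined to `[1, m - 1]` gives another
such walk with the endpoints exchanged. For the ratio, the walk on `{1, 2, …}` is a birth–death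
chain, hence reversible with respect to `π a = ∏_{1 ≤ j < a} p_j / q_{j+1}`. By detailed balance
the interior part `s_1 → ⋯ → s_k` of a path in `Γ_k` contributes `π (s_k) / π (s_1) = π (m - 1)`
to the ratio, and the two boundary steps `m - 1 → m` and `1 → 0` contribute `p_{m-1} / q_1`.
-/

open Finset

def stepProb (p : ℤ → ℝ) (a b : ℤ) : ℝ :=
  if b = a + 1 then p a else 1 - p a

lemma stepProb_ne_zero {p : ℤ → ℝ} (hp0 : ∀ j, p j ≠ 0) (hp1 : ∀ j, p j ≠ 1)
    (a b : ℤ) : stepProb p a b ≠ 0 := by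
  unfold stepProb
  split_ifs
  exacts [hp0 a, sub_ne_zero.mpr (hp1 a).symm]

lemma pathProb_eq_prod_range (p : ℤ → ℝ) (k : ℕ) (s : ℕ → ℤ) :
    pathProb p k s = ∏ i ∈ range k, stepProb p (s (i + 1)) (s (i + 2)) := by
  rw [pathProb, ← Ico_add_one_right_eq_Icc, prod_Ico_eq_prod_range, Nat.add_sub_cancel]
  simp only [add_comm 1, add_assoc, stepProb]

theorem mul_prod_range_eq_of_detailed_balance {α M : Type*} [CommMonoid M] (π : α → M)
    (w : α → α → M) (x : ℕ → α) (n : ℕ)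
    (hbal : ∀ i < n, π (x i) * w (x i) (x (i + 1)) = π (x (i + 1)) * w (x (i + 1)) (x i)) :
    π (x 0) * ∏ i ∈ range n, w (x i) (x (i + 1)) =
      π (x n) * ∏ i ∈ range n, w (x (i + 1)) (x i) := by
  induction n with
  | zero => simp
  | succ n ih =>
    rw [prod_range_succ, prod_range_succ, ← mul_assoc, ih fun i hi => hbal i (by omega),
      mul_right_comm, hbal n n.lt_succ_self]
    ac_rfl

/-- Detailed balance across the edge `a — a + 1` reads `π (a + 1) / π a = p a / (1 - p (a + 1))`,
which determines `π` on `{1, 2, …}` up to the normalisation `π 1 = 1`. -/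
noncomputable def reversibleMeasure (p : ℤ → ℝ) (a : ℤ) : ℝ :=
  ∏ j ∈ Ico 1 a.toNat, p j / (1 - p (j + 1))

section reversibleMeasure

variable {p : ℤ → ℝ}

@[simp]
lemma reversibleMeasure_one : reversibleMeasure p 1 = 1 := by
  simp [reversibleMeasure]

lemma reversibleMeasure_add_one {a : ℤ} (ha : 1 ≤ a) :
    reversibleMeasure p (a + 1) = reversibleMeasure p a * (p a / (1 - p (a + 1))) := by
  lift a to ℕ using (by omega)
  rw [reversibleMeasure, reversibleMeasure, ← Nat.cast_succ, Int.toNat_natCast,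
    Int.toNat_natCast, prod_Ico_succ_top (by omega)]
  push_cast
  rfl

lemma reversibleMeasure_mul_stepProb (hp1 : ∀ j, p j ≠ 1) {a b : ℤ} (ha : 1 ≤ a)
    (hb : 1 ≤ b) (hab : b - a = 1 ∨ b - a = -1) :
    reversibleMeasure p a * stepProb p a b = reversibleMeasure p b * stepProb p b a := by
  have up : ∀ c : ℤ, 1 ≤ c →
      reversibleMeasure p c * stepProb p c (c + 1) =
        reversibleMeasure p (c + 1) * stepProb p (c + 1) c := by
    intro c hc
    have hq : 1 - p (c + 1) ≠ 0 := sub_ne_zero.mpr (hp1 _).symm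
    rw [reversibleMeasure_add_one hc, stepProb, stepProb, if_pos rfl, if_neg (by omega)]
    field_simp
  rcases hab with h | h
  · obtain rfl : b = a + 1 := by omega
    exact up a ha
  · obtain rfl : a = b + 1 := by omega
    exact (up b hb).symm

lemma reversibleMeasure_mul_div_eq {n : ℕ} (hn : 1 ≤ n) :
    reversibleMeasure p n * p n / (1 - p 1) =
      (∏ j ∈ Icc 1 n, p j) / ∏ j ∈ Icc 1 n, (1 - p j) := by
  induction n, hn using Nat.le_induction with
  | base => simp
  | succ n hn ih =>
    push_cast
    rw [reversibleMeasure_add_one (by exact_mod_cast hn), prod_Icc_succ_top (by omega),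
      prod_Icc_succ_top (by omega), mul_div_mul_comm, ← ih]
    push_cast
    ring

end reversibleMeasure

def IsInteriorWalk (m k : ℕ) (s : ℕ → ℤ) : Prop :=
  (∀ i, 1 ≤ i → i ≤ k → 1 ≤ s i ∧ s i ≤ (m : ℤ) - 1) ∧
    ∀ i, 1 ≤ i → i < k → s (i + 1) - s i = 1 ∨ s (i + 1) - s i = -1

lemma IsInteriorWalk.congr {m k : ℕ} {s s' : ℕ → ℤ} (hs : IsInteriorWalk m k s)
    (h : ∀ i, 1 ≤ i → i ≤ k → s i = s' i) : IsInteriorWalk m k s' := by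
  refine ⟨fun i hi hik => h i hi hik ▸ hs.1 i hi hik, fun i hi hik => ?_⟩
  rw [← h i hi hik.le, ← h (i + 1) (by omega) hik]
  exact hs.2 i hi hik

section revPath

variable {k i : ℕ} {s : ℕ → ℤ}

lemma revPath_of_mem (hi : 1 ≤ i) (hik : i ≤ k) : revPath k s i = s (k + 1 - i) :=
  if_pos ⟨hi, hik⟩

lemma revPath_of_not_mem (h : i = 0 ∨ k < i) : revPath k s i = 0 :=
  if_neg (by omega)

lemma revPath_revPath (hi : 1 ≤ i) (hik : i ≤ k) : revPath k (revPath k s) i = s i := by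
  rw [revPath_of_mem hi hik, revPath_of_mem (by omega) (by omega)]
  congr 1
  omega

lemma revPath_congr {s' : ℕ → ℤ} (h : ∀ i, 1 ≤ i → i ≤ k → s i = s' i) :
    revPath k s = revPath k s' := by
  funext i
  unfold revPath
  split_ifs
  · exact h _ (by omega) (by omega)
  · rfl

lemma IsInteriorWalk.revPath {m : ℕ} (hs : IsInteriorWalk m k s) :
    IsInteriorWalk m k (revPath k s) := by
  refine ⟨fun i hi hik => ?_, fun i hi hik => ?_⟩
  · rw [revPath_of_mem hi hik]
    exact hs.1 _ (by omega) (by omega)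
  · rw [revPath_of_mem hi hik.le, revPath_of_mem (by omega) hik]
    have := hs.2 (k - i) (by omega) (by omega)
    rw [show k - i + 1 = k + 1 - i by omega] at this
    rw [show k + 1 - (i + 1) = k - i by omega]
    omega

end revPath

lemma mem_gammaSet_iff {m k : ℕ} (hm : 2 ≤ m) {s : ℕ → ℤ} :
    s ∈ gammaSet m k ↔ 1 ≤ k ∧ IsInteriorWalk m k s ∧ s 1 = 1 ∧ s k = (m : ℤ) - 1 ∧
      s (k + 1) = m ∧ ∀ i, i = 0 ∨ k + 2 ≤ i → s i = 0 := by
  constructor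
  · rintro ⟨h1, hlast, hbd, hstep, hpad⟩
    have hk : 1 ≤ k := Nat.pos_of_ne_zero fun hk => by subst hk; simp at hlast; omega
    have := hstep k hk le_rfl
    have := hbd k hk le_rfl
    exact ⟨hk, ⟨hbd, fun i hi hik => hstep i hi hik.le⟩, h1, by omega, hlast, hpad⟩
  · rintro ⟨hk, ⟨hbd, hstep⟩, h1, htop, hlast, hpad⟩
    refine ⟨h1, hlast, hbd, fun i hi hik => ?_, hpad⟩
    rcases hik.lt_or_eq with hik | rfl
    · exact hstep i hi hik
    · omega

lemma mem_gSet_iff {m k : ℕ} (hm : 2 ≤ m) {t : ℕ → ℤ} :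
    t ∈ gSet m k ↔ 1 ≤ k ∧ IsInteriorWalk m k t ∧ t 1 = (m : ℤ) - 1 ∧ t k = 1 ∧
      t (k + 1) = 0 ∧ ∀ i, i = 0 ∨ k + 2 ≤ i → t i = 0 := by
  constructor
  · rintro ⟨h1, hlast, hbd, hstep, hpad⟩
    have hk : 1 ≤ k := Nat.pos_of_ne_zero fun hk => by subst hk; simp at hlast; omega
    have := hstep k hk le_rfl
    have := hbd k hk le_rfl
    exact ⟨hk, ⟨hbd, fun i hi hik => hstep i hi hik.le⟩, h1, by omega, hlast, hpad⟩
  · rintro ⟨hk, ⟨hbd, hstep⟩, h1, hbot, hlast, hpad⟩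
    refine ⟨h1, hlast, hbd, fun i hi hik => ?_, hpad⟩
    rcases hik.lt_or_eq with hik | rfl
    · exact hstep i hi hik
    · omega

section bijection

variable {m k : ℕ}

lemma revPath_mapsTo (hm : 2 ≤ m) : Set.MapsTo (revPath k) (gammaSet m k) (gSet m k) := by
  intro s hs
  obtain ⟨hk, hwalk, h1, htop, -, -⟩ := (mem_gammaSet_iff hm).mp hs
  refine (mem_gSet_iff hm).mpr ⟨hk, hwalk.revPath, ?_, ?_, revPath_of_not_mem (by omega),
    fun i hi => revPath_of_not_mem (by omega)⟩
  · rwa [revPath_of_mem le_rfl hk, Nat.add_sub_cancel]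
  · rwa [revPath_of_mem hk le_rfl, Nat.add_sub_cancel_left]

lemma revPath_injOn (hm : 2 ≤ m) : Set.InjOn (revPath k) (gammaSet m k) := by
  intro s hs s' hs' h
  obtain ⟨-, -, -, -, hlast, hpad⟩ := (mem_gammaSet_iff hm).mp hs
  obtain ⟨-, -, -, -, hlast', hpad'⟩ := (mem_gammaSet_iff hm).mp hs'
  funext i
  by_cases hi : 1 ≤ i ∧ i ≤ k
  · rw [← revPath_revPath (s := s) hi.1 hi.2, h, revPath_revPath hi.1 hi.2]
  · by_cases hik : i = k + 1
    · rw [hik, hlast, hlast']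
    · rw [hpad i (by omega), hpad' i (by omega)]

lemma revPath_surjOn (hm : 2 ≤ m) : Set.SurjOn (revPath k) (gammaSet m k) (gSet m k) := by
  intro t ht
  obtain ⟨hk, hwalk, h1, hbot, hlast, hpad⟩ := (mem_gSet_iff hm).mp ht
  set s := Function.update (revPath k t) (k + 1) (m : ℤ)
  have hs : ∀ i, 1 ≤ i → i ≤ k → revPath k t i = s i := fun i _ hik =>
    (Function.update_of_ne (by omega) _ _).symm
  refine ⟨s, (mem_gammaSet_iff hm).mpr ⟨hk, hwalk.revPath.congr hs, ?_, ?_, ?_, ?_⟩, ?_⟩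
  · rw [← hs 1 le_rfl hk, revPath_of_mem le_rfl hk, Nat.add_sub_cancel, hbot]
  · rw [← hs k hk le_rfl, revPath_of_mem hk le_rfl, Nat.add_sub_cancel_left, h1]
  · exact Function.update_self _ _ _
  · exact fun i hi => (Function.update_of_ne (by omega) _ _).trans (revPath_of_not_mem (by omega))
  · funext i
    by_cases hi : 1 ≤ i ∧ i ≤ k
    · rw [← revPath_congr hs, revPath_revPath hi.1 hi.2]
    · rw [revPath_of_not_mem (by omega)]
      by_cases hik : i = k + 1
      · rw [hik, hlast]
      · rw [hpad i (by omega)]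

end bijection

lemma pathProb_revPath {k : ℕ} (p : ℤ → ℝ) {s : ℕ → ℤ} (h1 : s 1 = 1) :
    pathProb p (k + 1) (revPath (k + 1) s) =
      (∏ i ∈ range k, stepProb p (s (i + 2)) (s (i + 1))) * (1 - p 1) := by
  rw [pathProb_eq_prod_range, prod_range_succ, ← prod_range_reflect]
  congr 1
  · refine prod_congr rfl fun i hi => ?_
    rw [mem_range] at hi
    rw [revPath_of_mem (by omega) (by omega), revPath_of_mem (by omega) (by omega)]
    congr 2 <;> omega
  · rw [revPath_of_mem (by omega) le_rfl, revPath_of_not_mem (by omega),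
      Nat.add_sub_cancel_left, h1, stepProb, if_neg (by norm_num)]

theorem pathProb_div_pathProb_revPath {m k : ℕ} (hm : 2 ≤ m) {p : ℤ → ℝ}
    (hp0 : ∀ j, p j ≠ 0) (hp1 : ∀ j, p j ≠ 1) {s : ℕ → ℤ} (hs : s ∈ gammaSet m k) :
    pathProb p k s / pathProb p k (revPath k s) =
      reversibleMeasure p (m - 1) * p (m - 1) / (1 - p 1) := by
  obtain ⟨hk, hwalk, h1, htop, hlast, -⟩ := (mem_gammaSet_iff hm).mp hs
  obtain ⟨n, rfl⟩ : ∃ n, k = n + 1 := Nat.exists_eq_add_one.mpr hk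
  have hbal := mul_prod_range_eq_of_detailed_balance (reversibleMeasure p) (stepProb p)
    (fun i => s (i + 1)) n fun i hi => reversibleMeasure_mul_stepProb hp1
      (hwalk.1 _ (by omega) (by omega)).1 (hwalk.1 _ (by omega) (by omega)).1
      (hwalk.2 _ (by omega) (by omega))
  simp only [h1, htop, reversibleMeasure_one, one_mul] at hbal
  have hfwd : pathProb p (n + 1) s = (∏ i ∈ range n, stepProb p (s (i + 1)) (s (i + 2))) *
      p (m - 1) := by
    rw [pathProb_eq_prod_range, prod_range_succ, htop, hlast, stepProb, if_pos (by ring)]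
  have hB : ∏ i ∈ range n, stepProb p (s (i + 2)) (s (i + 1)) ≠ 0 :=
    prod_ne_zero_iff.mpr fun i _ => stepProb_ne_zero hp0 hp1 _ _
  have hq : 1 - p 1 ≠ 0 := sub_ne_zero.mpr (hp1 1).symm
  rw [hfwd, pathProb_revPath p h1, hbal]
  field_simp

theorem stmt_6_general (m : ℕ) (hm : 2 ≤ m) (p : ℤ → ℝ)
    (hp : ∀ j, p j ≠ 0 ∧ p j ≠ 1) (k : ℕ) :
    Set.BijOn (revPath k) (gammaSet m k) (gSet m k) ∧
    ∀ s ∈ gammaSet m k,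
      pathProb p k s / pathProb p k (revPath k s) =
        (∏ j ∈ Finset.Icc 1 (m - 1), p j) /
          (∏ j ∈ Finset.Icc 1 (m - 1), (1 - p j)) := by
  refine ⟨⟨revPath_mapsTo hm, revPath_injOn hm, revPath_surjOn hm⟩, fun s hs => ?_⟩
  rw [pathProb_div_pathProb_revPath hm (fun j => (hp j).1) (fun j => (hp j).2) hs,
    ← reversibleMeasure_mul_div_eq (by omega), Nat.cast_sub (by omega), Nat.cast_one]

/-- Path reversal is a probability-ratio-preserving bijection between `Γ_k`
(first-hitting paths from `1` to `m`) and `G_k` (first-hitting paths from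
`m-1` to `0`); for every `s ∈ Γ_k` the ratio of the probability of `s` to that
of its reversal equals `(p_1 ⋯ p_{m-1})/(q_1 ⋯ q_{m-1})`, independent of `s`
and `k`. -/
theorem stmt_6 (m : ℕ) (hm : 2 ≤ m) (p : ℤ → ℝ)
    (hp : ∀ j, p j ≠ 0 ∧ p j ≠ 1) (hper : ∀ j, p (j + m) = p j) (k : ℕ) :
    Set.BijOn (revPath k) (gammaSet m k) (gSet m k) ∧
    ∀ s ∈ gammaSet m k,
      pathProb p k s / pathProb p k (revPath k s) =
        (∏ j ∈ Finset.Icc 1 (m - 1), p j) /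
          (∏ j ∈ Finset.Icc 1 (m - 1), (1 - p j)) :=
  stmt_6_general m hm p hp k
end

section
/- For r ≥ 2, a ≥ 1, λ > 0, and Q(x) = (1+λ+a^r+λx^r)((1+λ)ax+λa+x)^r − ((1+λ)a^r x^r + λa^r + x^r)(1+λ+a+λx)^r, one has Q''(a) = (1+λ)^{r−1} r a^{r−2}(a+1)^{r−2} · λ · [ (r−1)(a^{r+2} − 1) + 2r(a^{r+1} − a) + (r+1)(a^r − a^2) ]; in particular Q''(a) > 0 for a > 1, Q''(a) = 0 for a = 1. -/
/-!
Write `Q x = A x * U x ^ r - B x * V x ^ r`, where `A`, `B` are affine in `x ^ r` and `U`, `V`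
are affine in `x`. The Leibniz rule gives `Q''` explicitly, and at `x = a` the two bases become
`U a = a (1 + λ) (a + 1)` and `V a = (1 + λ) (a + 1)`, so every term carries the factor
`(1 + λ) ^ (r - 1) a ^ (r - 2) (a + 1) ^ (r - 2)` and what remains is the stated bracket.
For `a > 1` each of its three summands is nonnegative and the first is positive.
-/

section

variable {𝕜 : Type*} [NontriviallyNormedField 𝕜]

theorem iteratedDeriv_comp_affine {n : ℕ} {f : 𝕜 → 𝕜} (hf : ContDiff 𝕜 n f) (p q x : 𝕜) :
    iteratedDeriv n (fun x => f (p * x + q)) x = p ^ n * iteratedDeriv n f (p * x + q) := by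
  rw [iteratedDeriv_comp_const_mul (f := fun y => f (y + q)) (by fun_prop),
    iteratedDeriv_comp_add_const]

theorem iteratedDeriv_affine_pow (n k : ℕ) (p q x : 𝕜) :
    iteratedDeriv k (fun x => (p * x + q) ^ n) x =
      n.descFactorial k * p ^ k * (p * x + q) ^ (n - k) := by
  rw [iteratedDeriv_comp_affine (f := (· ^ n)) (by fun_prop), iteratedDeriv_pow]
  ring

theorem iteratedDeriv_two_mul {f g : 𝕜 → 𝕜} {x : 𝕜} (hf : ContDiffAt 𝕜 2 f x)
    (hg : ContDiffAt 𝕜 2 g x) :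
    iteratedDeriv 2 (fun x => f x * g x) x =
      iteratedDeriv 2 f x * g x + 2 * deriv f x * deriv g x + f x * iteratedDeriv 2 g x := by
  rw [iteratedDeriv_fun_mul hf hg]
  simp [Finset.sum_range_succ]
  ring

theorem iteratedDeriv_two_monomial_mul_affine_pow (n : ℕ) (c k p q x : 𝕜) :
    iteratedDeriv 2 (fun x => (c + k * x ^ (n + 2)) * (p * x + q) ^ (n + 2)) x =
      (n + 2) * ((n + 1) * k * x ^ n * (p * x + q) ^ (n + 2) +
        2 * (n + 2) * k * p * x ^ (n + 1) * (p * x + q) ^ (n + 1) +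
        (n + 1) * p ^ 2 * (c + k * x ^ (n + 2)) * (p * x + q) ^ n) := by
  rw [iteratedDeriv_two_mul (by fun_prop) (by fun_prop), ← iteratedDeriv_one,
    ← iteratedDeriv_one (f := fun x => (p * x + q) ^ (n + 2))]
  simp [iteratedDeriv_affine_pow, iteratedDeriv_const_add two_pos, Nat.descFactorial]
  ring

end

def mixturePoly (r : ℕ) (a L x : ℝ) : ℝ :=
  (1 + L + a ^ r + L * x ^ r) * ((1 + L) * a * x + L * a + x) ^ r -
    ((1 + L) * a ^ r * x ^ r + L * a ^ r + x ^ r) * (1 + L + a + L * x) ^ r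

theorem deriv_deriv_mixturePoly {r : ℕ} (hr : 2 ≤ r) (a L : ℝ) :
    deriv (deriv (mixturePoly r a L)) a =
      (1 + L) ^ (r - 1) * r * a ^ (r - 2) * (a + 1) ^ (r - 2) * L *
        (((r : ℝ) - 1) * (a ^ (r + 2) - 1) + 2 * r * (a ^ (r + 1) - a) +
          ((r : ℝ) + 1) * (a ^ r - a ^ 2)) := by
  obtain ⟨n, rfl⟩ := Nat.exists_eq_add_of_le' hr
  have hQ : mixturePoly (n + 2) a L = fun x =>
      (1 + L + a ^ (n + 2) + L * x ^ (n + 2)) * (((1 + L) * a + 1) * x + L * a) ^ (n + 2) -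
        (L * a ^ (n + 2) + ((1 + L) * a ^ (n + 2) + 1) * x ^ (n + 2)) *
          (L * x + (1 + L + a)) ^ (n + 2) :=
    funext fun x => by rw [mixturePoly]; ring
  have hU : ((1 + L) * a + 1) * a + L * a = a * ((1 + L) * (a + 1)) := by ring
  have hV : L * a + (1 + L + a) = (1 + L) * (a + 1) := by ring
  rw [← iteratedDeriv_one (f := mixturePoly _ a L), ← iteratedDeriv_succ, hQ,
    iteratedDeriv_fun_sub (by fun_prop) (by fun_prop), iteratedDeriv_two_monomial_mul_affine_pow,
    iteratedDeriv_two_monomial_mul_affine_pow, hU, hV]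
  simp only [mul_pow, Nat.add_sub_cancel]
  push_cast
  ring

theorem mixture_bracket_pos {r : ℕ} (hr : 2 ≤ r) {a : ℝ} (ha : 1 < a) :
    0 < ((r : ℝ) - 1) * (a ^ (r + 2) - 1) + 2 * r * (a ^ (r + 1) - a) +
      ((r : ℝ) + 1) * (a ^ r - a ^ 2) := by
  have hr1 : (1 : ℝ) ≤ r - 1 := by
    rw [le_sub_iff_add_le]
    exact_mod_cast hr
  have h1 : 1 < a ^ (r + 2) := one_lt_pow₀ ha (by omega)
  have h2 : a < a ^ (r + 1) := by
    simpa using pow_lt_pow_right₀ ha (show 1 < r + 1 by omega)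
  have h3 : a ^ 2 ≤ a ^ r := pow_le_pow_right₀ ha.le hr
  have := mul_pos (by linarith : (0 : ℝ) < r - 1) (sub_pos.2 h1)
  have := mul_pos (by positivity : (0 : ℝ) < 2 * r) (sub_pos.2 h2)
  have := mul_nonneg (by positivity : (0 : ℝ) ≤ r + 1) (sub_nonneg.2 h3)
  linarith

theorem stmt_10_general (r : ℕ) (hr : 2 ≤ r) (a L : ℝ) (hL : 0 < L)
    (Q : ℝ → ℝ)
    (hQ : ∀ x : ℝ, Q x =
      (1 + L + a ^ r + L * x ^ r) * ((1 + L) * a * x + L * a + x) ^ r -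
      ((1 + L) * a ^ r * x ^ r + L * a ^ r + x ^ r) * (1 + L + a + L * x) ^ r) :
    deriv (deriv Q) a =
      (1 + L) ^ (r - 1) * r * a ^ (r - 2) * (a + 1) ^ (r - 2) * L *
        (((r : ℝ) - 1) * (a ^ (r + 2) - 1) + 2 * r * (a ^ (r + 1) - a) +
          ((r : ℝ) + 1) * (a ^ r - a ^ 2)) ∧
    (1 < a → 0 < deriv (deriv Q) a) ∧ (a = 1 → deriv (deriv Q) a = 0) := by
  have hQ'' := deriv_deriv_mixturePoly hr a L
  rw [show mixturePoly r a L = Q from funext fun x => (hQ x).symm] at hQ''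
  refine ⟨hQ'', fun ha => ?_, fun ha => ?_⟩
  · have : 0 < a := by linarith
    rw [hQ'']
    exact mul_pos (by positivity) (mixture_bracket_pos hr ha)
  · rw [hQ'', ha]
    simp

/-- The second derivative of the mixture polynomial `Q` at `x = a` equals
`(1+λ)^{r−1} r a^{r−2}(a+1)^{r−2} λ [(r−1)(a^{r+2}−1)+2r(a^{r+1}−a)+(r+1)(a^r−a^2)]`;
in particular it is positive for `a > 1` and zero for `a = 1`. -/
theorem stmt_10 (r : ℕ) (hr : 2 ≤ r) (a L : ℝ) (ha : 1 ≤ a) (hL : 0 < L)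
    (Q : ℝ → ℝ)
    (hQ : ∀ x : ℝ, Q x =
      (1 + L + a ^ r + L * x ^ r) * ((1 + L) * a * x + L * a + x) ^ r -
      ((1 + L) * a ^ r * x ^ r + L * a ^ r + x ^ r) * (1 + L + a + L * x) ^ r) :
    deriv (deriv Q) a =
      (1 + L) ^ (r - 1) * r * a ^ (r - 2) * (a + 1) ^ (r - 2) * L *
        (((r : ℝ) - 1) * (a ^ (r + 2) - 1) + 2 * r * (a ^ (r + 1) - a) +
          ((r : ℝ) + 1) * (a ^ r - a ^ 2)) ∧
    (1 < a → 0 < deriv (deriv Q) a) ∧ (a = 1 → deriv (deriv Q) a = 0) :=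
  stmt_10_general r hr a L hL Q hQ
end

section
/- For r ≥ 2, a ≥ 1, λ > 0, and Q as above, Q(x) > 0 for all x > a. Consequently, the random mixture (choosing game one with probability π = 1/(1+λ) at each play) of two fair Parrondo games G(m, β, β') and G(m, p, p') with m ≥ 3 and 1/2 ≤ β < p ≤ 1 is a winning game. -/
set_option maxHeartbeats 3200000

/-- Positivity certificate for the L-form submultiplicativity key lemma. -/
lemma parrondo_keySL (c1 q1 s1 t1 c2 q2 s2 t2 L : ℝ)
    (hc1 : 0 < c1) (hq1 : 0 ≤ q1) (hs1 : 0 ≤ s1) (ht1 : 0 < t1)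
    (hc2 : 0 < c2) (hq2 : 0 ≤ q2) (hs2 : 0 ≤ s2) (ht2 : 0 < t2) (hL : 0 < L) :
    (0:ℝ) < 4*c1^2*t1^2*c2^2*t2^2*L + 4*c1^3*q1*t1*c2^2*q2*s2*t2*L + 4*c1^2*q1*s1*t1*c2^3*q2*t2*L + 8*c1^2*q1*s1*t1*c2^2*q2*s2*t2*L + 4*c1^3*q1*t1*c2^2*q2*s2*t2*L^2 + 4*c1^2*q1*s1*t1*c2^3*q2*t2*L^2 + 8*c1^2*q1*s1*t1*c2^2*q2*s2*t2*L^2 + 2*c1^3*q1*t1*c2*q2*s2^2*t2*L + 3*c1^2*q1*s1*t1*c2*q2*s2^2*t2*L + 2*c1^3*q1*t1*c2*q2*s2^2*t2*L^2 + 3*c1^2*q1*s1*t1*c2*q2*s2^2*t2*L^2 + 2*c1*q1*s1^2*t1*c2^3*q2*t2*L + 3*c1*q1*s1^2*t1*c2^2*q2*s2*t2*L + 2*c1*q1*s1^2*t1*c2^3*q2*t2*L^2 + 3*c1*q1*s1^2*t1*c2^2*q2*s2*t2*L^2 + 1*c1*q1*s1^2*t1*c2*q2*s2^2*t2*L + 1*c1*q1*s1^2*t1*c2*q2*s2^2*t2*L^2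 + 2*c1^3*q1^2*s1*c2^2*t2^2*L + 2*c1^3*q1^2*s1*c2^2*t2^2*L^2 + 4*c1^3*q1*t1*c2^2*t2^2*L + 2*c1^3*q1*t1*c2*s2*t2^2*L + 2*c1^3*q1*t1*c2^2*t2^2*L^2 + 2*c1^3*q1*t1*c2*s2*t2^2*L^2 + 3*c1^2*q1^2*s1^2*c2^2*t2^2*L + 3*c1^2*q1^2*s1^2*c2^2*t2^2*L^2 + 8*c1^2*q1*s1*t1*c2^2*t2^2*L + 3*c1^2*q1*s1*t1*c2*s2*t2^2*L + 6*c1^2*q1*s1*t1*c2^2*t2^2*L^2 + 3*c1^2*q1*s1*t1*c2*s2*t2^2*L^2 + 1*c1*q1^2*s1^3*c2^2*t2^2*L + 1*c1*q1^2*s1^3*c2^2*t2^2*L^2 + 3*c1*q1*s1^2*t1*c2^2*t2^2*L + 1*c1*q1*s1^2*t1*c2*s2*t2^2*L + 3*c1*q1*s1^2*t1*c2^2*t2^2*L^2 + 1*c1*q1*s1^2*t1*c2*s2*t2^2*L^2 + 2*c1^2*t1^2*c2^3*q2^2*s2*L + 4*c1^2*t1^2*c2^3*q2*t2*L + 3*c1^2*t1^2*c2^2*q2^2*s2^2*L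 + 8*c1^2*t1^2*c2^2*q2*s2*t2*L + 2*c1^2*t1^2*c2^3*q2^2*s2*L^2 + 2*c1^2*t1^2*c2^3*q2*t2*L^2 + 3*c1^2*t1^2*c2^2*q2^2*s2^2*L^2 + 6*c1^2*t1^2*c2^2*q2*s2*t2*L^2 + 2*c1*s1*t1^2*c2^3*q2*t2*L + 3*c1*s1*t1^2*c2^2*q2*s2*t2*L + 2*c1*s1*t1^2*c2^3*q2*t2*L^2 + 3*c1*s1*t1^2*c2^2*q2*s2*t2*L^2 + 1*c1^2*t1^2*c2*q2^2*s2^3*L + 3*c1^2*t1^2*c2*q2*s2^2*t2*L + 1*c1^2*t1^2*c2*q2^2*s2^3*L^2 + 3*c1^2*t1^2*c2*q2*s2^2*t2*L^2 + 1*c1*s1*t1^2*c2*q2*s2^2*t2*L + 1*c1*s1*t1^2*c2*q2*s2^2*t2*L^2 + 2*c1^2*t1^2*c2*s2*t2^2*L + 2*c1^2*t1^2*c2^2*t2^2*L^2 + 2*c1^2*t1^2*c2*s2*t2^2*L^2 + 2*c1*s1*t1^2*c2^2*t2^2*L + 1*c1*s1*t1^2*c2*s2*t2^2*L + 2*c1*s1*t1^2*c2^2*t2^2*L^2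 + 1*c1*s1*t1^2*c2*s2*t2^2*L^2 := by
  positivity

/-- Positivity certificate for the π-form submultiplicativity key lemma. -/
lemma parrondo_keySP (c1 q1 s1 t1 c2 q2 s2 t2 v w : ℝ)
    (hc1 : 0 < c1) (hq1 : 0 ≤ q1) (hs1 : 0 ≤ s1) (ht1 : 0 < t1)
    (hc2 : 0 < c2) (hq2 : 0 ≤ q2) (hs2 : 0 ≤ s2) (ht2 : 0 < t2)
    (hv : 0 < v) (hw : 0 < w) :
    (0:ℝ) < 4*c1^2*t1^2*c2^2*t2^2*v^2*w + 4*c1^3*q1*t1*c2^2*q2*s2*t2*v^2*w + 4*c1^2*q1*s1*t1*c2^3*q2*t2*v^2*w + 8*c1^2*q1*s1*t1*c2^2*q2*s2*t2*v^2*w + 4*c1^3*q1*t1*c2^2*q2*s2*t2*v*w^2 + 4*c1^2*q1*s1*t1*c2^3*q2*t2*v*w^2 + 8*c1^2*q1*s1*t1*c2^2*q2*s2*t2*v*w^2 + 2*c1^3*q1*t1*c2*q2*s2^2*t2*v^2*w + 3*c1^2*q1*s1*t1*c2*q2*s2^2*t2*v^2*w + 2*c1^3*q1*t1*c2*q2*s2^2*t2*v*w^2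 + 3*c1^2*q1*s1*t1*c2*q2*s2^2*t2*v*w^2 + 2*c1*q1*s1^2*t1*c2^3*q2*t2*v^2*w + 3*c1*q1*s1^2*t1*c2^2*q2*s2*t2*v^2*w + 2*c1*q1*s1^2*t1*c2^3*q2*t2*v*w^2 + 3*c1*q1*s1^2*t1*c2^2*q2*s2*t2*v*w^2 + 1*c1*q1*s1^2*t1*c2*q2*s2^2*t2*v^2*w + 1*c1*q1*s1^2*t1*c2*q2*s2^2*t2*v*w^2 + 2*c1^3*q1^2*s1*c2^2*t2^2*v^2*w + 2*c1^3*q1^2*s1*c2^2*t2^2*v*w^2 + 4*c1^3*q1*t1*c2^2*t2^2*v^2*w + 2*c1^3*q1*t1*c2*s2*t2^2*v^2*w + 2*c1^3*q1*t1*c2^2*t2^2*v*w^2 + 2*c1^3*q1*t1*c2*s2*t2^2*v*w^2 + 3*c1^2*q1^2*s1^2*c2^2*t2^2*v^2*w + 3*c1^2*q1^2*s1^2*c2^2*t2^2*v*w^2 + 8*c1^2*q1*s1*t1*c2^2*t2^2*v^2*w + 3*c1^2*q1*s1*t1*c2*s2*t2^2*v^2*w + 6*c1^2*q1*s1*t1*c2^2*t2^2*v*w^2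 + 3*c1^2*q1*s1*t1*c2*s2*t2^2*v*w^2 + 1*c1*q1^2*s1^3*c2^2*t2^2*v^2*w + 1*c1*q1^2*s1^3*c2^2*t2^2*v*w^2 + 3*c1*q1*s1^2*t1*c2^2*t2^2*v^2*w + 1*c1*q1*s1^2*t1*c2*s2*t2^2*v^2*w + 3*c1*q1*s1^2*t1*c2^2*t2^2*v*w^2 + 1*c1*q1*s1^2*t1*c2*s2*t2^2*v*w^2 + 2*c1^2*t1^2*c2^3*q2^2*s2*v^2*w + 4*c1^2*t1^2*c2^3*q2*t2*v^2*w + 3*c1^2*t1^2*c2^2*q2^2*s2^2*v^2*w + 8*c1^2*t1^2*c2^2*q2*s2*t2*v^2*w + 2*c1^2*t1^2*c2^3*q2^2*s2*v*w^2 + 2*c1^2*t1^2*c2^3*q2*t2*v*w^2 + 3*c1^2*t1^2*c2^2*q2^2*s2^2*v*w^2 + 6*c1^2*t1^2*c2^2*q2*s2*t2*v*w^2 + 2*c1*s1*t1^2*c2^3*q2*t2*v^2*w + 3*c1*s1*t1^2*c2^2*q2*s2*t2*v^2*w + 2*c1*s1*t1^2*c2^3*q2*t2*v*w^2 + 3*c1*s1*t1^2*c2^2*q2*s2*t2*v*w^2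 + 1*c1^2*t1^2*c2*q2^2*s2^3*v^2*w + 3*c1^2*t1^2*c2*q2*s2^2*t2*v^2*w + 1*c1^2*t1^2*c2*q2^2*s2^3*v*w^2 + 3*c1^2*t1^2*c2*q2*s2^2*t2*v*w^2 + 1*c1*s1*t1^2*c2*q2*s2^2*t2*v^2*w + 1*c1*s1*t1^2*c2*q2*s2^2*t2*v*w^2 + 2*c1^2*t1^2*c2*s2*t2^2*v^2*w + 2*c1^2*t1^2*c2^2*t2^2*v*w^2 + 2*c1^2*t1^2*c2*s2*t2^2*v*w^2 + 2*c1*s1*t1^2*c2^2*t2^2*v^2*w + 1*c1*s1*t1^2*c2*s2*t2^2*v^2*w + 2*c1*s1*t1^2*c2^2*t2^2*v*w^2 + 1*c1*s1*t1^2*c2*s2*t2^2*v*w^2 := by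
  positivity

/-- L-form key lemma: submultiplicativity of the mixed odds ratio. -/
lemma parrondo_keyL (L b1 c1 p1 q1 b2 c2 p2 q2 : ℝ) (hL : 0 < L)
    (hc1 : 0 < c1) (hb1 : c1 ≤ b1) (hq1 : 0 ≤ q1) (ht1 : b1*q1 < p1*c1)
    (hc2 : 0 < c2) (hb2 : c2 ≤ b2) (hq2 : 0 ≤ q2) (ht2 : b2*q2 < p2*c2) :
    ((1+L)*((b1*b2)*(p1*p2)) + L*((b1*b2)*(q1*q2)) + (p1*p2)*(c1*c2)) *
      ((1+L)*(c1*q1) + b1*q1 + L*(p1*c1)) * ((1+L)*(c2*q2) + b2*q2 + L*(p2*c2)) <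
    ((1+L)*((c1*c2)*(q1*q2)) + (b1*b2)*(q1*q2) + L*((p1*p2)*(c1*c2))) *
      ((1+L)*(b1*p1) + L*(b1*q1) + p1*c1) * ((1+L)*(b2*p2) + L*(b2*q2) + p2*c2) := by
  have hS := parrondo_keySL c1 q1 (b1-c1) (p1*c1-b1*q1) c2 q2 (b2-c2) (p2*c2-b2*q2) L
    hc1 hq1 (by linarith) (by linarith) hc2 hq2 (by linarith) (by linarith) hL
  have hcc : (0:ℝ) < c1^2*c2^2 := by positivity
  have h2 : 0 * (c1^2*c2^2) <
      (((1+L)*((c1*c2)*(q1*q2)) + (b1*b2)*(q1*q2) + L*((p1*p2)*(c1*c2))) *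
      ((1+L)*(b1*p1) + L*(b1*q1) + p1*c1) * ((1+L)*(b2*p2) + L*(b2*q2) + p2*c2) -
      ((1+L)*((b1*b2)*(p1*p2)) + L*((b1*b2)*(q1*q2)) + (p1*p2)*(c1*c2)) *
      ((1+L)*(c1*q1) + b1*q1 + L*(p1*c1)) * ((1+L)*(c2*q2) + b2*q2 + L*(p2*c2))) *
      (c1^2*c2^2) := by
    rw [zero_mul]
    have hid : (((1+L)*((c1*c2)*(q1*q2)) + (b1*b2)*(q1*q2) + L*((p1*p2)*(c1*c2))) *
        ((1+L)*(b1*p1) + L*(b1*q1) + p1*c1) * ((1+L)*(b2*p2) + L*(b2*q2) + p2*c2) -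
        ((1+L)*((b1*b2)*(p1*p2)) + L*((b1*b2)*(q1*q2)) + (p1*p2)*(c1*c2)) *
        ((1+L)*(c1*q1) + b1*q1 + L*(p1*c1)) * ((1+L)*(c2*q2) + b2*q2 + L*(p2*c2))) *
        (c1^2*c2^2) = 4*c1^2*(p1*c1-b1*q1)^2*c2^2*(p2*c2-b2*q2)^2*L + 4*c1^3*q1*(p1*c1-b1*q1)*c2^2*q2*(b2-c2)*(p2*c2-b2*q2)*L + 4*c1^2*q1*(b1-c1)*(p1*c1-b1*q1)*c2^3*q2*(p2*c2-b2*q2)*L + 8*c1^2*q1*(b1-c1)*(p1*c1-b1*q1)*c2^2*q2*(b2-c2)*(p2*c2-b2*q2)*L + 4*c1^3*q1*(p1*c1-b1*q1)*c2^2*q2*(b2-c2)*(p2*c2-b2*q2)*L^2 + 4*c1^2*q1*(b1-c1)*(p1*c1-b1*q1)*c2^3*q2*(p2*c2-b2*q2)*L^2 + 8*c1^2*q1*(b1-c1)*(p1*c1-b1*q1)*c2^2*q2*(b2-c2)*(p2*c2-b2*q2)*L^2 + 2*c1^3*q1*(p1*c1-b1*q1)*c2*q2*(b2-c2)^2*(p2*c2-b2*q2)*L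 + 3*c1^2*q1*(b1-c1)*(p1*c1-b1*q1)*c2*q2*(b2-c2)^2*(p2*c2-b2*q2)*L + 2*c1^3*q1*(p1*c1-b1*q1)*c2*q2*(b2-c2)^2*(p2*c2-b2*q2)*L^2 + 3*c1^2*q1*(b1-c1)*(p1*c1-b1*q1)*c2*q2*(b2-c2)^2*(p2*c2-b2*q2)*L^2 + 2*c1*q1*(b1-c1)^2*(p1*c1-b1*q1)*c2^3*q2*(p2*c2-b2*q2)*L + 3*c1*q1*(b1-c1)^2*(p1*c1-b1*q1)*c2^2*q2*(b2-c2)*(p2*c2-b2*q2)*L + 2*c1*q1*(b1-c1)^2*(p1*c1-b1*q1)*c2^3*q2*(p2*c2-b2*q2)*L^2 + 3*c1*q1*(b1-c1)^2*(p1*c1-b1*q1)*c2^2*q2*(b2-c2)*(p2*c2-b2*q2)*L^2 + 1*c1*q1*(b1-c1)^2*(p1*c1-b1*q1)*c2*q2*(b2-c2)^2*(p2*c2-b2*q2)*L + 1*c1*q1*(b1-c1)^2*(p1*c1-b1*q1)*c2*q2*(b2-c2)^2*(p2*c2-b2*q2)*L^2 + 2*c1^3*q1^2*(b1-c1)*c2^2*(p2*c2-b2*q2)^2*L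 + 2*c1^3*q1^2*(b1-c1)*c2^2*(p2*c2-b2*q2)^2*L^2 + 4*c1^3*q1*(p1*c1-b1*q1)*c2^2*(p2*c2-b2*q2)^2*L + 2*c1^3*q1*(p1*c1-b1*q1)*c2*(b2-c2)*(p2*c2-b2*q2)^2*L + 2*c1^3*q1*(p1*c1-b1*q1)*c2^2*(p2*c2-b2*q2)^2*L^2 + 2*c1^3*q1*(p1*c1-b1*q1)*c2*(b2-c2)*(p2*c2-b2*q2)^2*L^2 + 3*c1^2*q1^2*(b1-c1)^2*c2^2*(p2*c2-b2*q2)^2*L + 3*c1^2*q1^2*(b1-c1)^2*c2^2*(p2*c2-b2*q2)^2*L^2 + 8*c1^2*q1*(b1-c1)*(p1*c1-b1*q1)*c2^2*(p2*c2-b2*q2)^2*L + 3*c1^2*q1*(b1-c1)*(p1*c1-b1*q1)*c2*(b2-c2)*(p2*c2-b2*q2)^2*L + 6*c1^2*q1*(b1-c1)*(p1*c1-b1*q1)*c2^2*(p2*c2-b2*q2)^2*L^2 + 3*c1^2*q1*(b1-c1)*(p1*c1-b1*q1)*c2*(b2-c2)*(p2*c2-b2*q2)^2*L^2 + 1*c1*q1^2*(b1-c1)^3*c2^2*(p2*c2-b2*q2)^2*L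 + 1*c1*q1^2*(b1-c1)^3*c2^2*(p2*c2-b2*q2)^2*L^2 + 3*c1*q1*(b1-c1)^2*(p1*c1-b1*q1)*c2^2*(p2*c2-b2*q2)^2*L + 1*c1*q1*(b1-c1)^2*(p1*c1-b1*q1)*c2*(b2-c2)*(p2*c2-b2*q2)^2*L + 3*c1*q1*(b1-c1)^2*(p1*c1-b1*q1)*c2^2*(p2*c2-b2*q2)^2*L^2 + 1*c1*q1*(b1-c1)^2*(p1*c1-b1*q1)*c2*(b2-c2)*(p2*c2-b2*q2)^2*L^2 + 2*c1^2*(p1*c1-b1*q1)^2*c2^3*q2^2*(b2-c2)*L + 4*c1^2*(p1*c1-b1*q1)^2*c2^3*q2*(p2*c2-b2*q2)*L + 3*c1^2*(p1*c1-b1*q1)^2*c2^2*q2^2*(b2-c2)^2*L + 8*c1^2*(p1*c1-b1*q1)^2*c2^2*q2*(b2-c2)*(p2*c2-b2*q2)*L + 2*c1^2*(p1*c1-b1*q1)^2*c2^3*q2^2*(b2-c2)*L^2 + 2*c1^2*(p1*c1-b1*q1)^2*c2^3*q2*(p2*c2-b2*q2)*L^2 + 3*c1^2*(p1*c1-b1*q1)^2*c2^2*q2^2*(b2-c2)^2*L^2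 + 6*c1^2*(p1*c1-b1*q1)^2*c2^2*q2*(b2-c2)*(p2*c2-b2*q2)*L^2 + 2*c1*(b1-c1)*(p1*c1-b1*q1)^2*c2^3*q2*(p2*c2-b2*q2)*L + 3*c1*(b1-c1)*(p1*c1-b1*q1)^2*c2^2*q2*(b2-c2)*(p2*c2-b2*q2)*L + 2*c1*(b1-c1)*(p1*c1-b1*q1)^2*c2^3*q2*(p2*c2-b2*q2)*L^2 + 3*c1*(b1-c1)*(p1*c1-b1*q1)^2*c2^2*q2*(b2-c2)*(p2*c2-b2*q2)*L^2 + 1*c1^2*(p1*c1-b1*q1)^2*c2*q2^2*(b2-c2)^3*L + 3*c1^2*(p1*c1-b1*q1)^2*c2*q2*(b2-c2)^2*(p2*c2-b2*q2)*L + 1*c1^2*(p1*c1-b1*q1)^2*c2*q2^2*(b2-c2)^3*L^2 + 3*c1^2*(p1*c1-b1*q1)^2*c2*q2*(b2-c2)^2*(p2*c2-b2*q2)*L^2 + 1*c1*(b1-c1)*(p1*c1-b1*q1)^2*c2*q2*(b2-c2)^2*(p2*c2-b2*q2)*L + 1*c1*(b1-c1)*(p1*c1-b1*q1)^2*c2*q2*(b2-c2)^2*(p2*c2-b2*q2)*L^2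 + 2*c1^2*(p1*c1-b1*q1)^2*c2*(b2-c2)*(p2*c2-b2*q2)^2*L + 2*c1^2*(p1*c1-b1*q1)^2*c2^2*(p2*c2-b2*q2)^2*L^2 + 2*c1^2*(p1*c1-b1*q1)^2*c2*(b2-c2)*(p2*c2-b2*q2)^2*L^2 + 2*c1*(b1-c1)*(p1*c1-b1*q1)^2*c2^2*(p2*c2-b2*q2)^2*L + 1*c1*(b1-c1)*(p1*c1-b1*q1)^2*c2*(b2-c2)*(p2*c2-b2*q2)^2*L + 2*c1*(b1-c1)*(p1*c1-b1*q1)^2*c2^2*(p2*c2-b2*q2)^2*L^2 + 1*c1*(b1-c1)*(p1*c1-b1*q1)^2*c2*(b2-c2)*(p2*c2-b2*q2)^2*L^2 := by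
      ring
    rw [hid]; exact hS
  exact sub_pos.mp (lt_of_mul_lt_mul_right h2 hcc.le)

/-- π-form key lemma. -/
lemma parrondo_keyP (v b1 c1 p1 q1 b2 c2 p2 q2 : ℝ) (hv0 : 0 < v) (hv1 : v < 1)
    (hc1 : 0 < c1) (hb1 : c1 ≤ b1) (hq1 : 0 ≤ q1) (ht1 : b1*q1 < p1*c1)
    (hc2 : 0 < c2) (hb2 : c2 ≤ b2) (hq2 : 0 ≤ q2) (ht2 : b2*q2 < p2*c2) :
    ((b1*b2)*(p1*p2) + (1-v)*((b1*b2)*(q1*q2)) + v*((p1*p2)*(c1*c2))) *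
      (c1*q1 + v*(b1*q1) + (1-v)*(p1*c1)) * (c2*q2 + v*(b2*q2) + (1-v)*(p2*c2)) <
    ((c1*c2)*(q1*q2) + v*((b1*b2)*(q1*q2)) + (1-v)*((p1*p2)*(c1*c2))) *
      (b1*p1 + (1-v)*(b1*q1) + v*(p1*c1)) * (b2*p2 + (1-v)*(b2*q2) + v*(p2*c2)) := by
  have hS := parrondo_keySP c1 q1 (b1-c1) (p1*c1-b1*q1) c2 q2 (b2-c2) (p2*c2-b2*q2) v (1-v)
    hc1 hq1 (by linarith) (by linarith) hc2 hq2 (by linarith) (by linarith) hv0 (by linarith)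
  have hcc : (0:ℝ) < c1^2*c2^2 := by positivity
  have h2 : 0 * (c1^2*c2^2) <
      (((c1*c2)*(q1*q2) + v*((b1*b2)*(q1*q2)) + (1-v)*((p1*p2)*(c1*c2))) *
      (b1*p1 + (1-v)*(b1*q1) + v*(p1*c1)) * (b2*p2 + (1-v)*(b2*q2) + v*(p2*c2)) -
      ((b1*b2)*(p1*p2) + (1-v)*((b1*b2)*(q1*q2)) + v*((p1*p2)*(c1*c2))) *
      (c1*q1 + v*(b1*q1) + (1-v)*(p1*c1)) * (c2*q2 + v*(b2*q2) + (1-v)*(p2*c2))) *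
      (c1^2*c2^2) := by
    rw [zero_mul]
    have hid : (((c1*c2)*(q1*q2) + v*((b1*b2)*(q1*q2)) + (1-v)*((p1*p2)*(c1*c2))) *
        (b1*p1 + (1-v)*(b1*q1) + v*(p1*c1)) * (b2*p2 + (1-v)*(b2*q2) + v*(p2*c2)) -
        ((b1*b2)*(p1*p2) + (1-v)*((b1*b2)*(q1*q2)) + v*((p1*p2)*(c1*c2))) *
        (c1*q1 + v*(b1*q1) + (1-v)*(p1*c1)) * (c2*q2 + v*(b2*q2) + (1-v)*(p2*c2))) *
        (c1^2*c2^2) = 4*c1^2*(p1*c1-b1*q1)^2*c2^2*(p2*c2-b2*q2)^2*v^2*(1-v) + 4*c1^3*q1*(p1*c1-b1*q1)*c2^2*q2*(b2-c2)*(p2*c2-b2*q2)*v^2*(1-v) + 4*c1^2*q1*(b1-c1)*(p1*c1-b1*q1)*c2^3*q2*(p2*c2-b2*q2)*v^2*(1-v) + 8*c1^2*q1*(b1-c1)*(p1*c1-b1*q1)*c2^2*q2*(b2-c2)*(p2*c2-b2*q2)*v^2*(1-v) + 4*c1^3*q1*(p1*c1-b1*q1)*c2^2*q2*(b2-c2)*(p2*c2-b2*q2)*v*(1-v)^2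 + 4*c1^2*q1*(b1-c1)*(p1*c1-b1*q1)*c2^3*q2*(p2*c2-b2*q2)*v*(1-v)^2 + 8*c1^2*q1*(b1-c1)*(p1*c1-b1*q1)*c2^2*q2*(b2-c2)*(p2*c2-b2*q2)*v*(1-v)^2 + 2*c1^3*q1*(p1*c1-b1*q1)*c2*q2*(b2-c2)^2*(p2*c2-b2*q2)*v^2*(1-v) + 3*c1^2*q1*(b1-c1)*(p1*c1-b1*q1)*c2*q2*(b2-c2)^2*(p2*c2-b2*q2)*v^2*(1-v) + 2*c1^3*q1*(p1*c1-b1*q1)*c2*q2*(b2-c2)^2*(p2*c2-b2*q2)*v*(1-v)^2 + 3*c1^2*q1*(b1-c1)*(p1*c1-b1*q1)*c2*q2*(b2-c2)^2*(p2*c2-b2*q2)*v*(1-v)^2 + 2*c1*q1*(b1-c1)^2*(p1*c1-b1*q1)*c2^3*q2*(p2*c2-b2*q2)*v^2*(1-v) + 3*c1*q1*(b1-c1)^2*(p1*c1-b1*q1)*c2^2*q2*(b2-c2)*(p2*c2-b2*q2)*v^2*(1-v) + 2*c1*q1*(b1-c1)^2*(p1*c1-b1*q1)*c2^3*q2*(p2*c2-b2*q2)*v*(1-v)^2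 + 3*c1*q1*(b1-c1)^2*(p1*c1-b1*q1)*c2^2*q2*(b2-c2)*(p2*c2-b2*q2)*v*(1-v)^2 + 1*c1*q1*(b1-c1)^2*(p1*c1-b1*q1)*c2*q2*(b2-c2)^2*(p2*c2-b2*q2)*v^2*(1-v) + 1*c1*q1*(b1-c1)^2*(p1*c1-b1*q1)*c2*q2*(b2-c2)^2*(p2*c2-b2*q2)*v*(1-v)^2 + 2*c1^3*q1^2*(b1-c1)*c2^2*(p2*c2-b2*q2)^2*v^2*(1-v) + 2*c1^3*q1^2*(b1-c1)*c2^2*(p2*c2-b2*q2)^2*v*(1-v)^2 + 4*c1^3*q1*(p1*c1-b1*q1)*c2^2*(p2*c2-b2*q2)^2*v^2*(1-v) + 2*c1^3*q1*(p1*c1-b1*q1)*c2*(b2-c2)*(p2*c2-b2*q2)^2*v^2*(1-v) + 2*c1^3*q1*(p1*c1-b1*q1)*c2^2*(p2*c2-b2*q2)^2*v*(1-v)^2 + 2*c1^3*q1*(p1*c1-b1*q1)*c2*(b2-c2)*(p2*c2-b2*q2)^2*v*(1-v)^2 + 3*c1^2*q1^2*(b1-c1)^2*c2^2*(p2*c2-b2*q2)^2*v^2*(1-v)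 + 3*c1^2*q1^2*(b1-c1)^2*c2^2*(p2*c2-b2*q2)^2*v*(1-v)^2 + 8*c1^2*q1*(b1-c1)*(p1*c1-b1*q1)*c2^2*(p2*c2-b2*q2)^2*v^2*(1-v) + 3*c1^2*q1*(b1-c1)*(p1*c1-b1*q1)*c2*(b2-c2)*(p2*c2-b2*q2)^2*v^2*(1-v) + 6*c1^2*q1*(b1-c1)*(p1*c1-b1*q1)*c2^2*(p2*c2-b2*q2)^2*v*(1-v)^2 + 3*c1^2*q1*(b1-c1)*(p1*c1-b1*q1)*c2*(b2-c2)*(p2*c2-b2*q2)^2*v*(1-v)^2 + 1*c1*q1^2*(b1-c1)^3*c2^2*(p2*c2-b2*q2)^2*v^2*(1-v) + 1*c1*q1^2*(b1-c1)^3*c2^2*(p2*c2-b2*q2)^2*v*(1-v)^2 + 3*c1*q1*(b1-c1)^2*(p1*c1-b1*q1)*c2^2*(p2*c2-b2*q2)^2*v^2*(1-v) + 1*c1*q1*(b1-c1)^2*(p1*c1-b1*q1)*c2*(b2-c2)*(p2*c2-b2*q2)^2*v^2*(1-v) + 3*c1*q1*(b1-c1)^2*(p1*c1-b1*q1)*c2^2*(p2*c2-b2*q2)^2*v*(1-v)^2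 + 1*c1*q1*(b1-c1)^2*(p1*c1-b1*q1)*c2*(b2-c2)*(p2*c2-b2*q2)^2*v*(1-v)^2 + 2*c1^2*(p1*c1-b1*q1)^2*c2^3*q2^2*(b2-c2)*v^2*(1-v) + 4*c1^2*(p1*c1-b1*q1)^2*c2^3*q2*(p2*c2-b2*q2)*v^2*(1-v) + 3*c1^2*(p1*c1-b1*q1)^2*c2^2*q2^2*(b2-c2)^2*v^2*(1-v) + 8*c1^2*(p1*c1-b1*q1)^2*c2^2*q2*(b2-c2)*(p2*c2-b2*q2)*v^2*(1-v) + 2*c1^2*(p1*c1-b1*q1)^2*c2^3*q2^2*(b2-c2)*v*(1-v)^2 + 2*c1^2*(p1*c1-b1*q1)^2*c2^3*q2*(p2*c2-b2*q2)*v*(1-v)^2 + 3*c1^2*(p1*c1-b1*q1)^2*c2^2*q2^2*(b2-c2)^2*v*(1-v)^2 + 6*c1^2*(p1*c1-b1*q1)^2*c2^2*q2*(b2-c2)*(p2*c2-b2*q2)*v*(1-v)^2 + 2*c1*(b1-c1)*(p1*c1-b1*q1)^2*c2^3*q2*(p2*c2-b2*q2)*v^2*(1-v) + 3*c1*(b1-c1)*(p1*c1-b1*q1)^2*c2^2*q2*(b2-c2)*(p2*c2-b2*q2)*v^2*(1-v)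 + 2*c1*(b1-c1)*(p1*c1-b1*q1)^2*c2^3*q2*(p2*c2-b2*q2)*v*(1-v)^2 + 3*c1*(b1-c1)*(p1*c1-b1*q1)^2*c2^2*q2*(b2-c2)*(p2*c2-b2*q2)*v*(1-v)^2 + 1*c1^2*(p1*c1-b1*q1)^2*c2*q2^2*(b2-c2)^3*v^2*(1-v) + 3*c1^2*(p1*c1-b1*q1)^2*c2*q2*(b2-c2)^2*(p2*c2-b2*q2)*v^2*(1-v) + 1*c1^2*(p1*c1-b1*q1)^2*c2*q2^2*(b2-c2)^3*v*(1-v)^2 + 3*c1^2*(p1*c1-b1*q1)^2*c2*q2*(b2-c2)^2*(p2*c2-b2*q2)*v*(1-v)^2 + 1*c1*(b1-c1)*(p1*c1-b1*q1)^2*c2*q2*(b2-c2)^2*(p2*c2-b2*q2)*v^2*(1-v) + 1*c1*(b1-c1)*(p1*c1-b1*q1)^2*c2*q2*(b2-c2)^2*(p2*c2-b2*q2)*v*(1-v)^2 + 2*c1^2*(p1*c1-b1*q1)^2*c2*(b2-c2)*(p2*c2-b2*q2)^2*v^2*(1-v) + 2*c1^2*(p1*c1-b1*q1)^2*c2^2*(p2*c2-b2*q2)^2*v*(1-v)^2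 + 2*c1^2*(p1*c1-b1*q1)^2*c2*(b2-c2)*(p2*c2-b2*q2)^2*v*(1-v)^2 + 2*c1*(b1-c1)*(p1*c1-b1*q1)^2*c2^2*(p2*c2-b2*q2)^2*v^2*(1-v) + 1*c1*(b1-c1)*(p1*c1-b1*q1)^2*c2*(b2-c2)*(p2*c2-b2*q2)^2*v^2*(1-v) + 2*c1*(b1-c1)*(p1*c1-b1*q1)^2*c2^2*(p2*c2-b2*q2)^2*v*(1-v)^2 + 1*c1*(b1-c1)*(p1*c1-b1*q1)^2*c2*(b2-c2)*(p2*c2-b2*q2)^2*v*(1-v)^2 := by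
      ring
    rw [hid]; exact hS
  exact sub_pos.mp (lt_of_mul_lt_mul_right h2 hcc.le)

/-- L-form main lemma: the mixed odds ratio of the r-th power game is dominated
by the r-th power of the mixed odds ratio.  Proof by induction on r. -/
lemma parrondo_mainL (L b c p q : ℝ) (hL : 0 < L) (hc : 0 < c) (hcb : c ≤ b)
    (hq : 0 ≤ q) (ht : b*q < p*c) :
    ∀ r : ℕ, 2 ≤ r →
    ((1+L)*(b^r*p^r) + L*(b^r*q^r) + p^r*c^r) * ((1+L)*(c*q) + b*q + L*(p*c))^r <
    ((1+L)*(c^r*q^r) + b^r*q^r + L*(p^r*c^r)) * ((1+L)*(b*p) + L*(b*q) + p*c)^r := by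
  have hb0 : 0 < b := lt_of_lt_of_le hc hcb
  have hp0 : 0 < p := by nlinarith [mul_nonneg hb0.le hq]
  intro r hr
  induction r, hr using Nat.le_induction with
  | base =>
    have h := parrondo_keyL L b c p q b c p q hL hc hcb hq ht hc hcb hq ht
    linarith [h]
  | succ n hn ih =>
    have hM : 0 < (1+L)*(c*q) + b*q + L*(p*c) := by positivity
    have hN : 0 < (1+L)*(b*p) + L*(b*q) + p*c := by positivity
    have hMn : ∀ k : ℕ, 0 < (1+L)*(c^k*q^k) + b^k*q^k + L*(p^k*c^k) := by
      intro k; positivity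
    have hne : n ≠ 0 := by omega
    have hpow : b^n*q^n < p^n*c^n := by
      have h0 := pow_lt_pow_left₀ ht (mul_nonneg hb0.le hq) hne
      rw [mul_pow, mul_pow] at h0; exact h0
    have hkey := parrondo_keyL L (b^n) (c^n) (p^n) (q^n) b c p q hL
      (pow_pos hc n) (pow_le_pow_left₀ hc.le hcb n) (pow_nonneg hq n) hpow
      hc hcb hq ht
    have h1 := mul_lt_mul_of_pos_right hkey (pow_pos hM n)
    have hM1 : 0 < (1+L)*(c^n*c*(q^n*q)) + b^n*b*(q^n*q) + L*(p^n*p*(c^n*c)) := by positivity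
    have h2 := mul_le_mul_of_nonneg_left ih.le (le_of_lt (mul_pos hM1 hN))
    have h3 : (((1+L)*(b^n*b*(p^n*p)) + L*(b^n*b*(q^n*q)) + p^n*p*(c^n*c)) *
        (((1+L)*(c*q) + b*q + L*(p*c))^n * ((1+L)*(c*q) + b*q + L*(p*c)))) *
        ((1+L)*(c^n*q^n) + b^n*q^n + L*(p^n*c^n)) <
        (((1+L)*(c^n*c*(q^n*q)) + b^n*b*(q^n*q) + L*(p^n*p*(c^n*c))) *
        (((1+L)*(b*p) + L*(b*q) + p*c)^n * ((1+L)*(b*p) + L*(b*q) + p*c))) *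
        ((1+L)*(c^n*q^n) + b^n*q^n + L*(p^n*c^n)) := by
      linarith [h1, h2]
    have h4 := lt_of_mul_lt_mul_right h3 (hMn n).le
    simp only [pow_succ]
    linarith [h4]

/-- π-form main lemma, by induction on r. -/
lemma parrondo_mainP (v b c p q : ℝ) (hv0 : 0 < v) (hv1 : v < 1) (hc : 0 < c) (hcb : c ≤ b)
    (hq : 0 ≤ q) (ht : b*q < p*c) :
    ∀ r : ℕ, 2 ≤ r →
    (b^r*p^r + (1-v)*(b^r*q^r) + v*(p^r*c^r)) * (c*q + v*(b*q) + (1-v)*(p*c))^r <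
    (c^r*q^r + v*(b^r*q^r) + (1-v)*(p^r*c^r)) * (b*p + (1-v)*(b*q) + v*(p*c))^r := by
  have hb0 : 0 < b := lt_of_lt_of_le hc hcb
  have hp0 : 0 < p := by nlinarith [mul_nonneg hb0.le hq]
  have hw : 0 < 1 - v := by linarith
  intro r hr
  induction r, hr using Nat.le_induction with
  | base =>
    have h := parrondo_keyP v b c p q b c p q hv0 hv1 hc hcb hq ht hc hcb hq ht
    linarith [h]
  | succ n hn ih =>
    have hM : 0 < c*q + v*(b*q) + (1-v)*(p*c) := by positivity
    have hN : 0 < b*p + (1-v)*(b*q) + v*(p*c) := by positivity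
    have hMn : ∀ k : ℕ, 0 < c^k*q^k + v*(b^k*q^k) + (1-v)*(p^k*c^k) := by
      intro k; positivity
    have hne : n ≠ 0 := by omega
    have hpow : b^n*q^n < p^n*c^n := by
      have h0 := pow_lt_pow_left₀ ht (mul_nonneg hb0.le hq) hne
      rw [mul_pow, mul_pow] at h0; exact h0
    have hkey := parrondo_keyP v (b^n) (c^n) (p^n) (q^n) b c p q hv0 hv1
      (pow_pos hc n) (pow_le_pow_left₀ hc.le hcb n) (pow_nonneg hq n) hpow
      hc hcb hq ht
    have h1 := mul_lt_mul_of_pos_right hkey (pow_pos hM n)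
    have hM1 : 0 < c^n*c*(q^n*q) + v*(b^n*b*(q^n*q)) + (1-v)*(p^n*p*(c^n*c)) := by positivity
    have h2 := mul_le_mul_of_nonneg_left ih.le (le_of_lt (mul_pos hM1 hN))
    have h3 : ((b^n*b*(p^n*p) + (1-v)*(b^n*b*(q^n*q)) + v*(p^n*p*(c^n*c))) *
        ((c*q + v*(b*q) + (1-v)*(p*c))^n * (c*q + v*(b*q) + (1-v)*(p*c)))) *
        (c^n*q^n + v*(b^n*q^n) + (1-v)*(p^n*c^n)) <
        ((c^n*c*(q^n*q) + v*(b^n*b*(q^n*q)) + (1-v)*(p^n*p*(c^n*c))) *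
        ((b*p + (1-v)*(b*q) + v*(p*c))^n * (b*p + (1-v)*(b*q) + v*(p*c)))) *
        (c^n*q^n + v*(b^n*q^n) + (1-v)*(p^n*c^n)) := by
      linarith [h1, h2]
    have h4 := lt_of_mul_lt_mul_right h3 (hMn n).le
    simp only [pow_succ]
    linarith [h4]

/-- (i) For `r ≥ 2`, `a ≥ 1`, `λ > 0`, the mixture polynomial `Q` is strictly
positive for all `x > a`.  (ii) Consequently, the random mixture (choosing the
first game with probability `π` at each play) of two fair Parrondo games
`G(m, β, β')` and `G(m, p, p')` with `m ≥ 3` and `1/2 ≤ β < p ≤ 1` is a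
winning game: the mixed parameters satisfy `P' P^{m-1} > (1-P')(1-P)^{m-1}`. -/
theorem stmt_11 :
    (∀ (r : ℕ), 2 ≤ r → ∀ (a L : ℝ), 1 ≤ a → 0 < L → ∀ x : ℝ, a < x →
      0 < (1 + L + a ^ r + L * x ^ r) * ((1 + L) * a * x + L * a + x) ^ r -
          ((1 + L) * a ^ r * x ^ r + L * a ^ r + x ^ r) * (1 + L + a + L * x) ^ r) ∧
    (∀ (m : ℕ), 3 ≤ m → ∀ (β β' p p' π : ℝ),
      1 / 2 ≤ β → β < p → p ≤ 1 →
      β' ∈ Set.Icc (0:ℝ) 1 → p' ∈ Set.Icc (0:ℝ) 1 → π ∈ Set.Ioo (0:ℝ) 1 →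
      β' * β ^ (m - 1) = (1 - β') * (1 - β) ^ (m - 1) →
      p' * p ^ (m - 1) = (1 - p') * (1 - p) ^ (m - 1) →
      (π * p' + (1 - π) * β') * (π * p + (1 - π) * β) ^ (m - 1) >
        (1 - (π * p' + (1 - π) * β')) * (1 - (π * p + (1 - π) * β)) ^ (m - 1)) := by
  constructor
  · intro r hr a L ha hL x hx
    have h := parrondo_mainL L a 1 x 1 hL one_pos ha zero_le_one (by linarith) r hr
    have e1 : (1+L)*((1:ℝ)*1) + a*1 + L*(x*1) = 1 + L + a + L * x := by ring
    have e2 : (1+L)*(a*x) + L*(a*1) + x*1 = (1 + L) * a * x + L * a + x := by ring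
    have e3 : (1+L)*(a^r*x^r) + L*(a^r*(1:ℝ)^r) + x^r*(1:ℝ)^r =
        (1 + L) * a ^ r * x ^ r + L * a ^ r + x ^ r := by
      rw [one_pow]; ring
    have e4 : (1+L)*((1:ℝ)^r*(1:ℝ)^r) + a^r*(1:ℝ)^r + L*(x^r*(1:ℝ)^r) =
        1 + L + a ^ r + L * x ^ r := by
      rw [one_pow]; ring
    rw [e1, e2, e3, e4] at h
    linarith [h]
  · intro m hm β β' p p' π hβ hβp hp1 hβ'mem hp'mem hπmem hfβ hfp
    obtain ⟨hπ0, hπ1⟩ := hπmem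
    set r := m - 1 with hrdef
    have hr2 : 2 ≤ r := by omega
    have hβ0 : (0:ℝ) < β := by linarith
    have hp0 : (0:ℝ) < p := by linarith
    have hc : (0:ℝ) < 1 - β := by linarith
    have hq : (0:ℝ) ≤ 1 - p := by linarith
    have hcb : 1 - β ≤ β := by linarith
    have ht : β*(1-p) < p*(1-β) := by nlinarith
    have hmain := parrondo_mainP π β (1-β) p (1-p) hπ0 hπ1 hc hcb hq ht r hr2
    have eM : (1-β)*(1-p) + π*(β*(1-p)) + (1-π)*(p*(1-β)) = 1 - (π*p + (1-π)*β) := by ring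
    have eN : β*p + (1-π)*(β*(1-p)) + π*(p*(1-β)) = π*p + (1-π)*β := by ring
    have hK : (0:ℝ) < (p^r + (1-p)^r) * (β^r + (1-β)^r) := by positivity
    have e3 : (1-β)^r*(1-p)^r + π*(β^r*(1-p)^r) + (1-π)*(p^r*(1-β)^r) =
        (π*p' + (1-π)*β') * ((p^r + (1-p)^r) * (β^r + (1-β)^r)) := by
      linear_combination (-(π*(β^r+(1-β)^r)))*hfp + (-((1-π)*(p^r+(1-p)^r)))*hfβ
    have e4 : β^r*p^r + (1-π)*(β^r*(1-p)^r) + π*(p^r*(1-β)^r) =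
        (1 - (π*p' + (1-π)*β')) * ((p^r + (1-p)^r) * (β^r + (1-β)^r)) := by
      linear_combination (π*(β^r+(1-β)^r))*hfp + ((1-π)*(p^r+(1-p)^r))*hfβ
    rw [eM, eN, e3, e4] at hmain
    have h6 : ((1 - (π*p' + (1-π)*β')) * (1 - (π*p + (1-π)*β))^r) *
        ((p^r + (1-p)^r) * (β^r + (1-β)^r)) <
        ((π*p' + (1-π)*β') * (π*p + (1-π)*β)^r) *
        ((p^r + (1-p)^r) * (β^r + (1-β)^r)) := by linarith [hmain]
    exact lt_of_mul_lt_mul_right h6 hK.le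
end

section
/- (Mihoc's theorem) Let P be a k×k row-stochastic matrix such that 1 is a simple eigenvalue and π = πP, ∑π_i = 1 has a unique solution. Then for each column j, the column sums of cofactors Δ_{·j} := ∑_i Δ_{ij} of I − P are all equal and nonzero, Δ_{jj} = ∑_i Δ_{ij} P_{ij}, and the stationary distribution is given by π_i = Δ_{ii}/Δ_{·1}, i.e., the stationary probabilities are proportional to the diagonal cofactors of I − P. -/
/-!
Write `A = 1 - P`. Its rows sum to zero, so `A` is singular, and so is every matrix obtained
from `A` by replacing one row with a vector of zero sum; by multilinearity of the determinant
in that row, each column of `adjugate A` is constant. Since `adjugate A * A = det A • 1 = 0`,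
the common row `c` of `adjugate A` satisfies `c P = c`. Finally `∑ c = trace (adjugate A)`,
which by Jacobi's formula is the derivative of the characteristic polynomial of `P` at `1`,
nonzero because `1` is a simple root.
-/

open Matrix Polynomial Finset

namespace Matrix

variable {n R : Type*} [Fintype n] [DecidableEq n] [CommRing R]

theorem adjugate_apply_eq_det_updateCol (A : Matrix n n R) (i j : n) :
    adjugate A i j = (A.updateCol i (Pi.single j 1)).det := by
  rw [← transpose_apply (adjugate A), adjugate_transpose, adjugate_apply, updateRow_transpose,
    det_transpose]

theorem derivative_det (M : Matrix n n R[X]) :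
    derivative M.det = ∑ i, (M.updateCol i fun r => derivative (M r i)).det := by
  simp only [det_apply', derivative_sum, derivative_intCast_mul, derivative_prod_finset, mul_sum]
  rw [sum_comm]
  refine sum_congr rfl fun i _ => sum_congr rfl fun σ _ => ?_
  rw [← prod_erase_mul univ _ (mem_univ i), updateCol_self]
  congr 2
  refine prod_congr rfl fun j hj => ?_
  rw [updateCol_ne (ne_of_mem_erase hj)]

theorem derivative_charpoly (M : Matrix n n R) :
    derivative M.charpoly = trace (adjugate (charmatrix M)) := by
  rw [charpoly, derivative_det, trace]
  refine sum_congr rfl fun i _ => ?_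
  rw [diag_apply, adjugate_apply_eq_det_updateCol]
  congr 2
  funext r
  rcases eq_or_ne r i with rfl | hri
  · simp [charmatrix_apply_eq]
  · simp [hri]

theorem charmatrix_map_eval (M : Matrix n n R) (t : R) :
    (charmatrix M).map (eval t) = scalar n t - M := by
  ext i j
  rcases eq_or_ne i j with rfl | hij
  · simp [charmatrix_apply_eq]
  · simp [hij]

theorem eval_derivative_charpoly (M : Matrix n n R) (t : R) :
    (derivative M.charpoly).eval t = trace (adjugate (scalar n t - M)) := by
  rw [derivative_charpoly, ← coe_evalRingHom, AddMonoidHom.map_trace, ← charmatrix_map_eval]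
  exact congrArg trace ((evalRingHom t).map_adjugate _)

theorem det_eq_zero_of_mulVec_one_eq_zero [Nonempty n] {A : Matrix n n R} (h : A *ᵥ 1 = 0) :
    A.det = 0 :=
  det_eq_zero_of_mulVec_eq_zero_of_mem_nonZeroDivisors h (i := Classical.arbitrary n)
    (one_mem _)

theorem adjugate_apply_eq_of_mulVec_one_eq_zero {A : Matrix n n R} (h : A *ᵥ 1 = 0)
    (i j j' : n) : adjugate A j i = adjugate A j' i := by
  have : Nonempty n := ⟨i⟩
  have hsum : (Pi.single j 1 - Pi.single j' 1 : n → R) ⬝ᵥ 1 = 0 := by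
    simp [sub_dotProduct]
  have hdiff : (A.updateRow i (Pi.single j 1 - Pi.single j' 1)).det = 0 := by
    apply det_eq_zero_of_mulVec_one_eq_zero
    rw [updateRow_mulVec, h, hsum, Function.update_eq_self_iff]
    rfl
  rw [sub_eq_add_neg, ← neg_one_smul R (Pi.single j' 1), det_updateRow_add,
    det_updateRow_smul] at hdiff
  rw [adjugate_apply, adjugate_apply]
  linear_combination hdiff

end Matrix

theorem Polynomial.eval_derivative_ne_zero_of_rootMultiplicity_eq_one {R : Type*} [CommRing R]
    {p : R[X]} {t : R} (h : p.rootMultiplicity t = 1) : (derivative p).eval t ≠ 0 := by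
  have hp : p ≠ 0 := by
    rintro rfl
    simp at h
  intro hd
  have := (one_lt_rootMultiplicity_iff_isRoot hp).2 ⟨(rootMultiplicity_pos hp).1 (by omega), hd⟩
  omega

theorem stmt_16_general (k : ℕ) [NeZero k] (P : Matrix (Fin k) (Fin k) ℝ)
    (hrow : ∀ i, ∑ j, P i j = 1)
    (hsimple : (Matrix.charpoly P).rootMultiplicity 1 = 1) :
    (∀ j j' : Fin k,
      ∑ i, Matrix.adjugate (1 - P) j i = ∑ i, Matrix.adjugate (1 - P) j' i) ∧
    (∀ j : Fin k, ∑ i, Matrix.adjugate (1 - P) j i ≠ 0) ∧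
    (∀ j : Fin k, Matrix.adjugate (1 - P) j j
        = ∑ i, Matrix.adjugate (1 - P) j i * P i j) ∧
    (Matrix.vecMul
        (fun i => Matrix.adjugate (1 - P) i i / ∑ i', Matrix.adjugate (1 - P) 0 i') P
      = (fun i => Matrix.adjugate (1 - P) i i / ∑ i', Matrix.adjugate (1 - P) 0 i') ∧
     (∑ i, Matrix.adjugate (1 - P) i i / ∑ i', Matrix.adjugate (1 - P) 0 i') = 1) := by
  set Δ := adjugate (1 - P)
  have hA : (1 - P) *ᵥ 1 = 0 := by
    rw [sub_mulVec, one_mulVec, sub_eq_zero]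
    ext i
    simp [mulVec, dotProduct, hrow]
  have hcol (i j : Fin k) : Δ j i = Δ 0 i := adjugate_apply_eq_of_mulVec_one_eq_zero hA i j 0
  have hfix : Δ * P = Δ := by
    have := adjugate_mul (1 - P)
    rw [det_eq_zero_of_mulVec_one_eq_zero hA, zero_smul, mul_sub, mul_one, sub_eq_zero] at this
    exact this.symm
  have hdiag : ∑ i, Δ i i = ∑ i, Δ 0 i := sum_congr rfl fun i _ => hcol i i
  have hrowsum (j : Fin k) : ∑ i, Δ j i = ∑ i, Δ 0 i := sum_congr rfl fun i _ => hcol i j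
  have hs : ∑ i, Δ 0 i ≠ 0 := by
    have htrace := eval_derivative_ne_zero_of_rootMultiplicity_eq_one hsimple
    rw [eval_derivative_charpoly, map_one] at htrace
    exact hdiag ▸ htrace
  refine ⟨fun j j' => by rw [hrowsum j, hrowsum j'], fun j => hrowsum j ▸ hs,
    fun j => by rw [← mul_apply, hfix], ?_, by rw [← sum_div, hdiag, div_self hs]⟩
  ext j
  simp only [vecMul, dotProduct, hcol, div_mul_eq_mul_div, ← sum_div]
  rw [← mul_apply, hfix]

/-- (Mihoc's theorem)  Let `P` be a `k×k` row-stochastic matrix for which `1`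
is a simple eigenvalue and the stationary equations `π = πP`, `∑ π = 1` have a
unique solution.  Writing `Δ i j := adjugate (I - P) j i` for the
`(i,j)`-cofactor of `I - P`:  all column sums `Δ_{·j} = ∑ i, Δ i j` are equal
and nonzero, `Δ j j = ∑ i, Δ i j * P i j`, and the stationary distribution is
`π i = Δ i i / Δ_{·1}` (stationary probabilities are proportional to the
diagonal cofactors of `I - P`). -/
theorem stmt_16 (k : ℕ) [NeZero k] (P : Matrix (Fin k) (Fin k) ℝ)
    (hnonneg : ∀ i j, 0 ≤ P i j) (hrow : ∀ i, ∑ j, P i j = 1)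
    (hsimple : (Matrix.charpoly P).rootMultiplicity 1 = 1)
    (huniq : ∃! x : Fin k → ℝ, Matrix.vecMul x P = x ∧ ∑ i, x i = 1) :
    (∀ j j' : Fin k,
      ∑ i, Matrix.adjugate (1 - P) j i = ∑ i, Matrix.adjugate (1 - P) j' i) ∧
    (∀ j : Fin k, ∑ i, Matrix.adjugate (1 - P) j i ≠ 0) ∧
    (∀ j : Fin k, Matrix.adjugate (1 - P) j j
        = ∑ i, Matrix.adjugate (1 - P) j i * P i j) ∧
    (Matrix.vecMul
        (fun i => Matrix.adjugate (1 - P) i i / ∑ i', Matrix.adjugate (1 - P) 0 i') P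
      = (fun i => Matrix.adjugate (1 - P) i i / ∑ i', Matrix.adjugate (1 - P) 0 i') ∧
     (∑ i, Matrix.adjugate (1 - P) i i / ∑ i', Matrix.adjugate (1 - P) 0 i') = 1) :=
  stmt_16_general k P hrow hsimple
end

section
/- Let C be a (r+t)×(r+t) stochastic matrix of block form [[0, A],[B, 0]] with A of size r×t and B of size t×r (a period-2 chain with a single recurrent class). Then the set of diagonal cofactors of I − C consists of the diagonal cofactors of I_r − AB (for the first r indices) together with those of I_t − BA (for the last t indices); moreover the common column sum of cofactors of I_r − AB equals that of I_t − BA, and each equals half the common column sum of cofactors of I − C. -/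
open Polynomial Matrix Finset

section Aux
lemma myDerivDet {n : Type*} [Fintype n] [DecidableEq n] {R : Type*} [CommRing R]
    (M : Matrix n n R[X]) :
    derivative M.det = ∑ i, (M.updateCol i fun k => derivative (M k i)).det := by
  simp only [Matrix.det_apply']
  rw [map_sum, Finset.sum_comm]
  refine Finset.sum_congr rfl fun σ _ => ?_
  rw [derivative_mul]
  have hc : derivative ((↑↑(Equiv.Perm.sign σ) : R[X])) = 0 := by
    rcases Int.units_eq_one_or (Equiv.Perm.sign σ) with h | h <;> simp [h]
  rw [hc, zero_mul, zero_add]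
  have hprod : derivative (∏ i : n, M (σ i) i)
      = ∑ i : n, (∏ j ∈ univ.erase i, M (σ j) j) * derivative (M (σ i) i) := by
    rw [Finset.prod_eq_multiset_prod, derivative_prod, ← Finset.sum_eq_multiset_sum]
    refine Finset.sum_congr rfl fun i _ => ?_
    rw [← Finset.erase_val, ← Finset.prod_eq_multiset_prod]
  rw [hprod, Finset.mul_sum]
  refine Finset.sum_congr rfl fun i _ => ?_
  have : ∏ j : n, (M.updateCol i fun k => derivative (M k i)) (σ j) j
      = derivative (M (σ i) i) * ∏ j ∈ univ.erase i, M (σ j) j := by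
    rw [← Finset.mul_prod_erase univ _ (Finset.mem_univ i)]
    congr 1
    · simp [Matrix.updateCol_apply]
    · exact Finset.prod_congr rfl fun j hj => by
        simp [Matrix.updateCol_apply, Finset.ne_of_mem_erase hj]
  rw [this]; ring

lemma myCharmatrixEval {n : Type*} [Fintype n] [DecidableEq n] (M : Matrix n n ℝ) :
    (charmatrix M).map (eval 1) = 1 - M := by
  ext i j
  by_cases h : i = j
  · subst h; simp
  · simp [h, Matrix.charmatrix_apply_ne _ _ _ h, Matrix.one_apply_ne h]

lemma myDetUpdateColSingle {n : Type*} [Fintype n] [DecidableEq n] {R : Type*} [CommRing R]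
    (P : Matrix n n R) (i : n) :
    (P.updateCol i (Pi.single i 1)).det = P.adjugate i i := by
  rw [← Matrix.det_transpose, ← Matrix.updateRow_transpose, ← Matrix.adjugate_apply,
    ← Matrix.adjugate_transpose, Matrix.transpose_apply]

lemma myDerivCharpolyEval {n : Type*} [Fintype n] [DecidableEq n] (M : Matrix n n ℝ) :
    (derivative M.charpoly).eval 1 = ∑ i, (1 - M).adjugate i i := by
  rw [Matrix.charpoly, myDerivDet, eval_finset_sum]
  refine Finset.sum_congr rfl fun i _ => ?_
  have h1 : ((charmatrix M).updateCol i fun k => derivative (charmatrix M k i)).det.eval 1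
      = (((charmatrix M).updateCol i fun k => derivative (charmatrix M k i)).map (eval 1)).det := by
    exact RingHom.map_det (Polynomial.evalRingHom (1:ℝ)) _
  rw [h1]
  have h2 : ((charmatrix M).updateCol i fun k => derivative (charmatrix M k i)).map (eval 1)
      = (1 - M).updateCol i (Pi.single i 1) := by
    ext a b
    by_cases hb : b = i
    · subst hb
      by_cases ha : a = b
      · subst ha; simp [Matrix.updateCol_apply]
      · simp [Matrix.updateCol_apply, Matrix.charmatrix_apply_ne _ _ _ ha,
          Pi.single_eq_of_ne ha]
    · have := congrFun (congrFun (myCharmatrixEval M) a) b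
      simp only [Matrix.map_apply, Matrix.updateCol_apply, hb, if_false] at *
      simpa using this
  rw [h2, myDetUpdateColSingle]

lemma myCharpolyEvalOne {n : Type*} [Fintype n] [DecidableEq n] (M : Matrix n n ℝ) :
    M.charpoly.eval 1 = (1 - M).det := by
  rw [Matrix.charpoly]
  rw [show (charmatrix M).det.eval 1 = ((charmatrix M).map (eval 1)).det from
    RingHom.map_det (Polynomial.evalRingHom (1:ℝ)) _]
  congr 1
  exact myCharmatrixEval M

lemma myConst {n : Type*} [Fintype n] [DecidableEq n] [Nonempty n] (M : Matrix n n ℝ)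
    (hone : M *ᵥ (fun _ => (1:ℝ)) = fun _ => 1)
    (hmul : M.charpoly.rootMultiplicity 1 ≤ 1)
    {v : n → ℝ} (hv : M *ᵥ v = v) (i i' : n) : v i = v i' := by
  by_contra hne
  set K := 1 - M with hK
  have hK1 : K *ᵥ (fun _ => (1:ℝ)) = 0 := by
    rw [hK, Matrix.sub_mulVec, Matrix.one_mulVec, hone, sub_self]
  have hKv : K *ᵥ v = 0 := by
    rw [hK, Matrix.sub_mulVec, Matrix.one_mulVec, hv, sub_self]
  have hker : ∀ b : n, ∃ w : n → ℝ, w ≠ 0 ∧ K *ᵥ w = 0 ∧ w b = 0 := by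
    intro b
    refine ⟨fun x => v x - v b, ?_, ?_, by simp⟩
    · intro h0
      have h1 := congrFun h0 i
      have h2 := congrFun h0 i'
      simp only [Pi.zero_apply, sub_eq_zero] at h1 h2
      exact hne (h1.trans h2.symm)
    · have : (fun x => v x - v b) = v - (v b) • (fun _ => (1:ℝ)) := by
        funext x; simp
      rw [this, Matrix.mulVec_sub, hKv, Matrix.mulVec_smul, hK1]
      simp
  have hdet : K.det = 0 := by
    refine Matrix.exists_mulVec_eq_zero_iff.mp ?_
    obtain ⟨w, hw, hw2, _⟩ := hker (Classical.arbitrary n)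
    exact ⟨w, hw, hw2⟩
  have hadj : ∀ a b : n, K.adjugate a b = 0 := by
    intro a b
    obtain ⟨w, hw0, hwK, hwa⟩ := hker a
    rw [Matrix.adjugate_apply]
    refine Matrix.exists_mulVec_eq_zero_iff.mp ⟨w, hw0, ?_⟩
    funext c
    by_cases hc : c = b
    · subst hc
      simp only [Matrix.mulVec, Matrix.updateRow_self, dotProduct]
      simpa [Pi.single_apply] using hwa
    · have := congrFun hwK c
      simpa [Matrix.mulVec, dotProduct, Matrix.updateRow_ne hc] using this
  have hp0 : M.charpoly.eval 1 = 0 := by rw [myCharpolyEvalOne]; exact hdet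
  have hp1 : (derivative M.charpoly).eval 1 = 0 := by
    rw [myDerivCharpolyEval]
    exact Finset.sum_eq_zero fun i _ => hadj i i
  have hpne : M.charpoly ≠ 0 := (Matrix.charpoly_monic M).ne_zero
  obtain ⟨q, hq⟩ := (dvd_iff_isRoot.mpr hp0)
  have hq1 : q.eval 1 = 0 := by
    have := congrArg (fun p => (derivative p).eval 1) hq
    simp only [derivative_mul, derivative_sub, derivative_X, derivative_C, sub_zero, eval_add,
      eval_mul, eval_sub, eval_X, eval_C, sub_self, zero_mul, one_mul, hp1] at this
    linarith [this]
  obtain ⟨q', hq'⟩ := (dvd_iff_isRoot.mpr hq1)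
  have hdvd : (X - C (1:ℝ)) ^ 2 ∣ M.charpoly := ⟨q', by rw [hq, hq']; ring⟩
  have := (Polynomial.le_rootMultiplicity_iff hpne).mpr hdvd
  omega

lemma myCharmatrixZero {k : Type*} [Fintype k] [DecidableEq k] :
    charmatrix (0 : Matrix k k ℝ) = (X : ℝ[X]) • (1 : Matrix k k ℝ[X]) := by
  ext i j
  by_cases h : i = j
  · subst h; simp
  · simp [Matrix.charmatrix_apply_ne _ _ _ h, Matrix.one_apply_ne h]

lemma myBlockCharpoly {m n : Type*} [Fintype m] [Fintype n] [DecidableEq m] [DecidableEq n]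
    (A : Matrix m n ℝ) (B : Matrix n m ℝ) :
    X ^ (Fintype.card m) * (fromBlocks 0 A B 0).charpoly
      = X ^ (Fintype.card n) * ((A * B).charpoly).comp (X ^ 2) := by
  set A' := A.map ⇑(C : ℝ →+* ℝ[X]) with hA'
  set B' := B.map ⇑(C : ℝ →+* ℝ[X]) with hB'
  have hchar : charmatrix (fromBlocks 0 A B 0)
      = fromBlocks ((X : ℝ[X]) • (1 : Matrix m m ℝ[X])) (-A') (-B')
          ((X : ℝ[X]) • (1 : Matrix n n ℝ[X])) := by
    rw [Matrix.charmatrix_fromBlocks, myCharmatrixZero, myCharmatrixZero]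
  have hmul : charmatrix (fromBlocks 0 A B 0)
        * fromBlocks ((X : ℝ[X]) • (1 : Matrix m m ℝ[X])) 0 B' 1
      = fromBlocks (((X : ℝ[X]) ^ 2) • (1 : Matrix m m ℝ[X]) - (A * B).map ⇑(C : ℝ →+* ℝ[X]))
          (-A') 0 ((X : ℝ[X]) • (1 : Matrix n n ℝ[X])) := by
    rw [hchar, Matrix.fromBlocks_multiply]
    have h11 : ((X : ℝ[X]) • (1 : Matrix m m ℝ[X])) * ((X : ℝ[X]) • (1 : Matrix m m ℝ[X]))
          + (-A') * B'
        = ((X : ℝ[X]) ^ 2) • (1 : Matrix m m ℝ[X]) - (A * B).map ⇑(C : ℝ →+* ℝ[X]) := by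
      rw [Matrix.smul_mul, Matrix.mul_smul, smul_smul, ← sq, mul_one, Matrix.neg_mul,
        hA', hB', ← Matrix.map_mul]
      abel
    have h12 : ((X : ℝ[X]) • (1 : Matrix m m ℝ[X])) * (0 : Matrix m n ℝ[X])
        + (-A') * (1 : Matrix n n ℝ[X]) = -A' := by simp
    have h21 : (-B') * ((X : ℝ[X]) • (1 : Matrix m m ℝ[X]))
          + ((X : ℝ[X]) • (1 : Matrix n n ℝ[X])) * B' = 0 := by
      rw [Matrix.mul_smul, Matrix.smul_mul, Matrix.mul_one, Matrix.one_mul]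
      simp
    have h22 : (-B') * (0 : Matrix m n ℝ[X]) + ((X : ℝ[X]) • (1 : Matrix n n ℝ[X]))
        * (1 : Matrix n n ℝ[X]) = (X : ℝ[X]) • (1 : Matrix n n ℝ[X]) := by simp
    rw [h11, h12, h21, h22]
  have hdet := congrArg Matrix.det hmul
  rw [Matrix.det_mul, Matrix.det_fromBlocks_zero₁₂, Matrix.det_fromBlocks_zero₂₁,
    Matrix.det_smul, Matrix.det_smul, Matrix.det_one, Matrix.det_one, mul_one, mul_one] at hdet
  have hcomp : ((A * B).charpoly).comp (X ^ 2)
      = (((X : ℝ[X]) ^ 2) • (1 : Matrix m m ℝ[X]) - (A * B).map ⇑(C : ℝ →+* ℝ[X])).det := by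
    have h1 : ((A * B).charpoly).comp (X ^ 2)
        = (Polynomial.eval₂RingHom (C : ℝ →+* ℝ[X]) (X ^ 2)) (charmatrix (A * B)).det := rfl
    rw [h1, RingHom.map_det]
    congr 1
    ext i j : 2
    by_cases h : i = j
    · subst h
      simp [-Matrix.map_mul, Matrix.charmatrix_apply_eq]
    · simp [-Matrix.map_mul, Matrix.charmatrix_apply_ne _ _ _ h, Matrix.one_apply_ne h]
  rw [Matrix.charpoly, hcomp]
  linear_combination hdet

lemma myMultTransfer {m n : Type*} [Fintype m] [Fintype n] [DecidableEq m] [DecidableEq n]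
    (A : Matrix m n ℝ) (B : Matrix n m ℝ)
    (h : ((fromBlocks 0 A B 0 : Matrix (m ⊕ n) (m ⊕ n) ℝ).charpoly).rootMultiplicity 1 = 1) :
    ((A * B).charpoly).rootMultiplicity 1 ≤ 1 := by
  have hkey := myBlockCharpoly A B
  have hpne : (fromBlocks 0 A B 0 : Matrix (m ⊕ n) (m ⊕ n) ℝ).charpoly ≠ 0 :=
    (Matrix.charpoly_monic _).ne_zero
  have hXne : (X : ℝ[X]) ^ Fintype.card m ≠ 0 := pow_ne_zero _ X_ne_zero
  have hLne : (X : ℝ[X]) ^ Fintype.card m * (fromBlocks 0 A B 0).charpoly ≠ 0 :=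
    mul_ne_zero hXne hpne
  have hRne : (X : ℝ[X]) ^ Fintype.card n * ((A * B).charpoly).comp (X ^ 2) ≠ 0 :=
    hkey ▸ hLne
  have hcompne : ((A * B).charpoly).comp (X ^ 2) ≠ 0 := right_ne_zero_of_mul hRne
  have hx : ∀ k : ℕ, rootMultiplicity 1 ((X : ℝ[X]) ^ k) = 0 := fun k =>
    rootMultiplicity_eq_zero (by simp [Polynomial.IsRoot])
  have e1 : rootMultiplicity 1 ((X : ℝ[X]) ^ Fintype.card m
      * (fromBlocks 0 A B 0 : Matrix (m ⊕ n) (m ⊕ n) ℝ).charpoly) = 1 := by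
    rw [rootMultiplicity_mul hLne, hx, h, zero_add]
  have e2 : rootMultiplicity 1 (((A * B).charpoly).comp (X ^ 2)) = 1 := by
    rw [hkey] at e1
    rwa [rootMultiplicity_mul hRne, hx, zero_add] at e1
  set q := (A * B).charpoly with hq
  obtain ⟨u, hu⟩ := Polynomial.pow_rootMultiplicity_dvd q 1
  have hdvd2 : (X - Polynomial.C (1 : ℝ)) ^ (q.rootMultiplicity 1) ∣ q.comp (X ^ 2) := by
    have hcomp2 : q.comp (X ^ 2)
        = ((X - Polynomial.C (1 : ℝ)) ^ (q.rootMultiplicity 1)).comp (X ^ 2) * u.comp (X ^ 2) := by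
      rw [← Polynomial.mul_comp, ← hu]
    rw [hcomp2, Polynomial.pow_comp, Polynomial.sub_comp, Polynomial.X_comp, Polynomial.C_comp]
    exact Dvd.dvd.mul_right
      (pow_dvd_pow_of_dvd ⟨X + Polynomial.C 1, by rw [Polynomial.C_1]; ring⟩ (q.rootMultiplicity 1)) _
  have hle := (Polynomial.le_rootMultiplicity_iff hcompne).mpr hdvd2
  omega

lemma myUpdateRowMul {m n p : Type*} [Fintype n] [DecidableEq m]
    (A : Matrix m n ℝ) (B : Matrix n p ℝ) (i : m) :
    (A.updateRow i 0) * B = (A * B).updateRow i 0 := by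
  ext a b
  by_cases h : a = i
  · subst h; simp [Matrix.mul_apply]
  · simp [Matrix.mul_apply, Matrix.updateRow_ne h]

lemma myOneSubUpdate {m : Type*} [Fintype m] [DecidableEq m] (P : Matrix m m ℝ) (i : m) :
    (1 - P).updateRow i (Pi.single i 1) = 1 - P.updateRow i 0 := by
  ext a b
  by_cases h : a = i
  · subst h
    simp [Matrix.updateRow_self, Pi.single_apply, Matrix.one_apply, eq_comm]
  · simp [Matrix.updateRow_ne h]


lemma myFromBlocksSub {m n : Type*} [Fintype m] [Fintype n] [DecidableEq m] [DecidableEq n]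
    (A : Matrix m n ℝ) (B : Matrix n m ℝ) :
    (1 - fromBlocks 0 A B 0 : Matrix (m ⊕ n) (m ⊕ n) ℝ) = fromBlocks 1 (-A) (-B) 1 := by
  rw [← Matrix.fromBlocks_one, sub_eq_add_neg, Matrix.fromBlocks_neg, Matrix.fromBlocks_add]
  simp

lemma myUpdateRowFromBlocksInl {m n l o : Type*} [DecidableEq m] [DecidableEq n]
    (P : Matrix m l ℝ) (Q : Matrix m o ℝ) (R : Matrix n l ℝ) (S : Matrix n o ℝ)
    (i : m) (v : l ⊕ o → ℝ) :
    (fromBlocks P Q R S).updateRow (Sum.inl i) v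
      = fromBlocks (P.updateRow i (v ∘ Sum.inl)) (Q.updateRow i (v ∘ Sum.inr)) R S := by
  ext (a | a) (b | b) <;> simp [Matrix.updateRow_apply]

lemma myUpdateRowFromBlocksInr {m n l o : Type*} [DecidableEq m] [DecidableEq n]
    (P : Matrix m l ℝ) (Q : Matrix m o ℝ) (R : Matrix n l ℝ) (S : Matrix n o ℝ)
    (j : n) (v : l ⊕ o → ℝ) :
    (fromBlocks P Q R S).updateRow (Sum.inr j) v
      = fromBlocks P Q (R.updateRow j (v ∘ Sum.inl)) (S.updateRow j (v ∘ Sum.inr)) := by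
  ext (a | a) (b | b) <;> simp [Matrix.updateRow_apply]

lemma myUpdateRowOne {m : Type*} [Fintype m] [DecidableEq m] (i : m) :
    (1 : Matrix m m ℝ).updateRow i (Pi.single i 1) = 1 := by
  ext a b
  by_cases h : a = i
  · subst h; simp [Pi.single_apply, Matrix.one_apply, eq_comm]
  · simp [Matrix.updateRow_ne h]

lemma myUpdateRowNeg {m l : Type*} [DecidableEq m] (A : Matrix m l ℝ) (i : m) :
    (-A).updateRow i 0 = -(A.updateRow i 0) := by
  ext a b
  by_cases h : a = i
  · subst h; simp
  · simp [Matrix.updateRow_ne h]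

lemma myAdjDiagInl {m n : Type*} [Fintype m] [Fintype n] [DecidableEq m] [DecidableEq n]
    (A : Matrix m n ℝ) (B : Matrix n m ℝ) (i : m) :
    (1 - fromBlocks 0 A B 0).adjugate (Sum.inl i) (Sum.inl i) = (1 - A * B).adjugate i i := by
  rw [Matrix.adjugate_apply, Matrix.adjugate_apply]
  have hs1 : (Pi.single (Sum.inl i) (1:ℝ) : m ⊕ n → ℝ) ∘ Sum.inl = Pi.single i 1 := by
    funext x; simp [Pi.single_apply]
  have hs2 : (Pi.single (Sum.inl i) (1:ℝ) : m ⊕ n → ℝ) ∘ Sum.inr = 0 := by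
    funext x; simp [Pi.single_apply]
  have e1 : (1 - fromBlocks 0 A B 0 : Matrix (m ⊕ n) (m ⊕ n) ℝ).updateRow (Sum.inl i)
        (Pi.single (Sum.inl i) 1)
      = fromBlocks 1 (-(A.updateRow i 0)) (-B) 1 := by
    rw [myFromBlocksSub, myUpdateRowFromBlocksInl, hs1, hs2, myUpdateRowOne, myUpdateRowNeg]
  rw [e1, Matrix.det_fromBlocks_one₂₂, Matrix.neg_mul, Matrix.mul_neg, neg_neg,
    myUpdateRowMul, myOneSubUpdate]

lemma myAdjDiagInr {m n : Type*} [Fintype m] [Fintype n] [DecidableEq m] [DecidableEq n]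
    (A : Matrix m n ℝ) (B : Matrix n m ℝ) (j : n) :
    (1 - fromBlocks 0 A B 0).adjugate (Sum.inr j) (Sum.inr j) = (1 - B * A).adjugate j j := by
  rw [Matrix.adjugate_apply, Matrix.adjugate_apply]
  have hs1 : (Pi.single (Sum.inr j) (1:ℝ) : m ⊕ n → ℝ) ∘ Sum.inl = 0 := by
    funext x; simp [Pi.single_apply]
  have hs2 : (Pi.single (Sum.inr j) (1:ℝ) : m ⊕ n → ℝ) ∘ Sum.inr = Pi.single j 1 := by
    funext x; simp [Pi.single_apply]
  have e1 : (1 - fromBlocks 0 A B 0 : Matrix (m ⊕ n) (m ⊕ n) ℝ).updateRow (Sum.inr j)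
        (Pi.single (Sum.inr j) 1)
      = fromBlocks 1 (-A) (-(B.updateRow j 0)) 1 := by
    rw [myFromBlocksSub, myUpdateRowFromBlocksInr, hs1, hs2, myUpdateRowOne, myUpdateRowNeg]
  rw [e1, Matrix.det_fromBlocks_one₁₁, Matrix.neg_mul, Matrix.mul_neg, neg_neg,
    myUpdateRowMul, myOneSubUpdate]
end Aux

lemma myCore (r t : ℕ) (A : Matrix (Fin r) (Fin t) ℝ) (B : Matrix (Fin t) (Fin r) ℝ)
    (hArow : ∀ i, ∑ j, A i j = 1) (hBrow : ∀ i, ∑ j, B i j = 1)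
    (hsimple : ((fromBlocks 0 A B 0 : Matrix (Fin r ⊕ Fin t) (Fin r ⊕ Fin t) ℝ).charpoly).rootMultiplicity 1 = 1)
    (j : Fin r) (j0 : Fin t) :
    (∑ i, (1 - A * B).adjugate j i = ∑ i, (1 - B * A).adjugate j0 i)
    ∧ ∀ k, 2 * (∑ i, (1 - A * B).adjugate j i)
        = ∑ y, (1 - fromBlocks 0 A B 0 : Matrix (Fin r ⊕ Fin t) (Fin r ⊕ Fin t) ℝ).adjugate k y := by
  haveI : Nonempty (Fin r) := ⟨j⟩
  haveI : Nonempty (Fin t) := ⟨j0⟩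
  set Cb : Matrix (Fin r ⊕ Fin t) (Fin r ⊕ Fin t) ℝ := fromBlocks 0 A B 0 with hCb
  have hCrow : Cb *ᵥ (fun _ => (1:ℝ)) = fun _ => 1 := by
    funext x
    cases x with
    | inl a =>
      simp only [Matrix.mulVec, dotProduct, mul_one, Fintype.sum_sum_type, hCb]
      simp [hArow a]
    | inr a =>
      simp only [Matrix.mulVec, dotProduct, mul_one, Fintype.sum_sum_type, hCb]
      simp [hBrow a]
  have hABrow : (A * B) *ᵥ (fun _ => (1:ℝ)) = fun _ => 1 := by
    funext x
    simp only [Matrix.mulVec, dotProduct, mul_one, Matrix.mul_apply]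
    rw [Finset.sum_comm]
    simp only [← Finset.mul_sum]
    simp [hBrow, hArow x]
  have hBArow : (B * A) *ᵥ (fun _ => (1:ℝ)) = fun _ => 1 := by
    funext x
    simp only [Matrix.mulVec, dotProduct, mul_one, Matrix.mul_apply]
    rw [Finset.sum_comm]
    simp only [← Finset.mul_sum]
    simp [hArow, hBrow x]
  have hmAB : ((A * B).charpoly).rootMultiplicity 1 ≤ 1 := myMultTransfer A B hsimple
  have hswap : ((fromBlocks 0 B A 0 : Matrix (Fin t ⊕ Fin r) (Fin t ⊕ Fin r) ℝ).charpoly)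
      = Cb.charpoly := by
    rw [← Matrix.charpoly_reindex (Equiv.sumComm (Fin r) (Fin t)) Cb]
    congr 1
    rw [Matrix.reindex_apply]
    rw [show ⇑(Equiv.sumComm (Fin r) (Fin t)).symm = (Sum.swap : Fin t ⊕ Fin r → _) from
      funext fun z => by cases z <;> rfl]
    exact (Matrix.fromBlocks_submatrix_sum_swap_sum_swap _ _ _ _).symm
  have hmBA : ((B * A).charpoly).rootMultiplicity 1 ≤ 1 :=
    myMultTransfer B A (by rw [hswap]; exact hsimple)
  have hdetC : (1 - Cb).det = 0 := by
    refine Matrix.exists_mulVec_eq_zero_iff.mp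
      ⟨fun _ => 1, fun h => one_ne_zero (congrFun h (Sum.inl j)), ?_⟩
    rw [Matrix.sub_mulVec, Matrix.one_mulVec, hCrow, sub_self]
  have hdetAB : (1 - A * B).det = 0 := by
    refine Matrix.exists_mulVec_eq_zero_iff.mp
      ⟨fun _ => 1, fun h => one_ne_zero (congrFun h j), ?_⟩
    rw [Matrix.sub_mulVec, Matrix.one_mulVec, hABrow, sub_self]
  have hdetBA : (1 - B * A).det = 0 := by
    refine Matrix.exists_mulVec_eq_zero_iff.mp
      ⟨fun _ => 1, fun h => one_ne_zero (congrFun h j0), ?_⟩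
    rw [Matrix.sub_mulVec, Matrix.one_mulVec, hBArow, sub_self]
  have hconstC : ∀ x x' y, (1 - Cb).adjugate x y = (1 - Cb).adjugate x' y := by
    intro x x' y
    have h0 : Cb * (1 - Cb).adjugate = (1 - Cb).adjugate := by
      have h1 : (1 - Cb) * (1 - Cb).adjugate = 0 := by
        rw [Matrix.mul_adjugate, hdetC, zero_smul]
      rw [Matrix.sub_mul, Matrix.one_mul] at h1
      exact (sub_eq_zero.mp h1).symm
    have hcol : Cb *ᵥ (fun z => (1 - Cb).adjugate z y) = fun z => (1 - Cb).adjugate z y := by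
      funext z
      have := congrFun (congrFun h0 z) y
      simpa [Matrix.mulVec, dotProduct, Matrix.mul_apply] using this
    exact myConst Cb hCrow (le_of_eq hsimple) hcol x x'
  have hconstAB : ∀ x x' y, (1 - A * B).adjugate x y = (1 - A * B).adjugate x' y := by
    intro x x' y
    have h0 : (A * B) * (1 - A * B).adjugate = (1 - A * B).adjugate := by
      have h1 : (1 - A * B) * (1 - A * B).adjugate = 0 := by
        rw [Matrix.mul_adjugate, hdetAB, zero_smul]
      rw [Matrix.sub_mul, Matrix.one_mul] at h1
      exact (sub_eq_zero.mp h1).symm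
    have hcol : (A * B) *ᵥ (fun z => (1 - A * B).adjugate z y)
        = fun z => (1 - A * B).adjugate z y := by
      funext z
      have := congrFun (congrFun h0 z) y
      simpa [Matrix.mulVec, dotProduct, Matrix.mul_apply] using this
    exact myConst (A * B) hABrow hmAB hcol x x'
  have hconstBA : ∀ x x' y, (1 - B * A).adjugate x y = (1 - B * A).adjugate x' y := by
    intro x x' y
    have h0 : (B * A) * (1 - B * A).adjugate = (1 - B * A).adjugate := by
      have h1 : (1 - B * A) * (1 - B * A).adjugate = 0 := by
        rw [Matrix.mul_adjugate, hdetBA, zero_smul]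
      rw [Matrix.sub_mul, Matrix.one_mul] at h1
      exact (sub_eq_zero.mp h1).symm
    have hcol : (B * A) *ᵥ (fun z => (1 - B * A).adjugate z y)
        = fun z => (1 - B * A).adjugate z y := by
      funext z
      have := congrFun (congrFun h0 z) y
      simpa [Matrix.mulVec, dotProduct, Matrix.mul_apply] using this
    exact myConst (B * A) hBArow hmBA hcol x x'
  set w : (Fin r ⊕ Fin t) → ℝ := fun y => (1 - Cb).adjugate (Sum.inl j) y with hw
  have hleft : (1 - Cb).adjugate * Cb = (1 - Cb).adjugate := by
    have h1 : (1 - Cb).adjugate * (1 - Cb) = 0 := by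
      rw [Matrix.adjugate_mul, hdetC, zero_smul]
    rw [Matrix.mul_sub, Matrix.mul_one] at h1
    exact (sub_eq_zero.mp h1).symm
  have hstar : ∀ m0 : Fin r, w (Sum.inl m0) = ∑ jt, w (Sum.inr jt) * B jt m0 := by
    intro m0
    have h2 := congrFun (congrFun hleft (Sum.inl j)) (Sum.inl m0)
    rw [Matrix.mul_apply, Fintype.sum_sum_type] at h2
    simp only [hCb, Matrix.fromBlocks_apply₁₁, Matrix.fromBlocks_apply₂₁, Matrix.zero_apply,
      mul_zero, Finset.sum_const_zero, zero_add] at h2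
    exact h2.symm
  have hsum : ∑ m0, w (Sum.inl m0) = ∑ jt, w (Sum.inr jt) := by
    calc ∑ m0, w (Sum.inl m0) = ∑ m0, ∑ jt, w (Sum.inr jt) * B jt m0 :=
          Finset.sum_congr rfl fun m0 _ => hstar m0
      _ = ∑ jt, ∑ m0, w (Sum.inr jt) * B jt m0 := Finset.sum_comm
      _ = ∑ jt, w (Sum.inr jt) := by
          refine Finset.sum_congr rfl fun jt _ => ?_
          rw [← Finset.mul_sum, hBrow jt, mul_one]
  have halpha : ∀ (x : Fin r) (i : Fin r), (1 - A * B).adjugate x i = w (Sum.inl i) := by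
    intro x i
    rw [hconstAB x i i, ← myAdjDiagInl A B i]
    exact hconstC (Sum.inl i) (Sum.inl j) (Sum.inl i)
  have hbeta : ∀ (x : Fin t) (i : Fin t), (1 - B * A).adjugate x i = w (Sum.inr i) := by
    intro x i
    rw [hconstBA x i i, ← myAdjDiagInr A B i]
    exact hconstC (Sum.inr i) (Sum.inl j) (Sum.inr i)
  constructor
  · calc ∑ i, (1 - A * B).adjugate j i = ∑ i, w (Sum.inl i) :=
          Finset.sum_congr rfl fun i _ => halpha j i
      _ = ∑ i, w (Sum.inr i) := hsum
      _ = ∑ i, (1 - B * A).adjugate j0 i :=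
          (Finset.sum_congr rfl fun i _ => hbeta j0 i).symm
  · intro k
    have hC2 : ∑ y, (1 - Cb).adjugate k y = ∑ y, w y :=
      Finset.sum_congr rfl fun y _ => hconstC k (Sum.inl j) y
    have hA2 : ∑ i, (1 - A * B).adjugate j i = ∑ i, w (Sum.inl i) :=
      Finset.sum_congr rfl fun i _ => halpha j i
    rw [hC2, Fintype.sum_sum_type, ← hsum, hA2]
    ring

/-- For a period-2 stochastic matrix `C = [[0, A],[B, 0]]` (a single recurrent
class, i.e. `1` a simple eigenvalue):  the diagonal cofactors of `I - C` at
the first `r` indices are the diagonal cofactors of `I_r - AB`, and at the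
last `t` indices those of `I_t - BA`; the common column sum of the cofactors
of `I_r - AB` equals that of `I_t - BA`, and each equals half the common
column sum of the cofactors of `I - C`. -/
theorem stmt_17 (r t : ℕ) (A : Matrix (Fin r) (Fin t) ℝ)
    (B : Matrix (Fin t) (Fin r) ℝ)
    (hA : ∀ i j, 0 ≤ A i j) (hArow : ∀ i, ∑ j, A i j = 1)
    (hB : ∀ i j, 0 ≤ B i j) (hBrow : ∀ i, ∑ j, B i j = 1)
    (C : Matrix (Fin r ⊕ Fin t) (Fin r ⊕ Fin t) ℝ)
    (hC : C = Matrix.fromBlocks 0 A B 0)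
    (hsimple : (Matrix.charpoly C).rootMultiplicity 1 = 1) :
    (∀ i : Fin r, Matrix.adjugate (1 - C) (Sum.inl i) (Sum.inl i)
        = Matrix.adjugate (1 - A * B) i i) ∧
    (∀ j : Fin t, Matrix.adjugate (1 - C) (Sum.inr j) (Sum.inr j)
        = Matrix.adjugate (1 - B * A) j j) ∧
    (∀ (j : Fin r) (j' : Fin t),
      ∑ i, Matrix.adjugate (1 - A * B) j i = ∑ i, Matrix.adjugate (1 - B * A) j' i) ∧
    (∀ (j : Fin r) (k : Fin r ⊕ Fin t),
      ∑ i, Matrix.adjugate (1 - A * B) j i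
        = (1 / 2) * ∑ i, Matrix.adjugate (1 - C) k i) := by
  subst hC
  refine ⟨fun i => myAdjDiagInl A B i, fun j => myAdjDiagInr A B j, ?_, ?_⟩
  · intro j j'
    exact (myCore r t A B hArow hBrow hsimple j j').1
  · intro j k
    rcases Nat.eq_zero_or_pos t with ht | ht
    · subst ht
      have := hArow j
      simp at this
    · have h4 := (myCore r t A B hArow hBrow hsimple j ⟨0, ht⟩).2 k
      linarith
end

section
/- For the diffusion dW_t = dB_t + μ(W_t)dt, where μ is the step function equal to the constant μ_j on the interval (j, j+1], the embedded walk on ℤ has transition probabilities p_j = r(μ_{j−1}) / (r(μ_{j−1}) + r(−μ_j)), where r(u) = (e^{2u} − 1)/u for u ≠ 0 and r(0) = 2, and p_j is the probability that W started at j hits j+1 before j−1. -/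
/-- The piecewise-constant drift equal to `μf j` on the interval `(j, j+1]`. -/
noncomputable def stepDrift (μf : ℤ → ℝ) (x : ℝ) : ℝ := μf (⌈x⌉ - 1)

/-- The scale function `S(x) = 2∫₀ˣ exp(-2∫₀ʸ μ(z) dz) dy` of the diffusion
`dW = dB + μ(W) dt`. -/
noncomputable def scaleFn (μf : ℤ → ℝ) (x : ℝ) : ℝ :=
  2 * ∫ y in (0:ℝ)..x, Real.exp (-2 * ∫ z in (0:ℝ)..y, stepDrift μf z)

/-- `r(u) = (e^{2u} - 1)/u` for `u ≠ 0`, `r(0) = 2`. -/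
noncomputable def rFun (u : ℝ) : ℝ :=
  if u = 0 then 2 else (Real.exp (2 * u) - 1) / u

/-!
On each cell `[k, k+1]` the primitive `∫₀ʸ μ` of the drift is affine with slope `μ_k`, so the
scale density `exp(-2∫₀ʸ μ)` is an exponential there and the increment of the scale function
across the cell is `exp(-2∫₀ᵏ μ) · 2∫₀¹ e^{-2μ_k t} dt = exp(-2∫₀ᵏ μ) · r(-μ_k)`. In the hitting
probability `(S(j) - S(j-1)) / (S(j+1) - S(j-1))` the common factor `exp(-2∫₀^{j-1} μ)` cancels,
and the remaining factor `e^{-2μ_{j-1}}` is absorbed by `e^{2u} r(-u) = r(u)`.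
-/

open MeasureTheory Real Set

lemma two_mul_integral_exp_neg_two_mul (u : ℝ) :
    2 * ∫ t in (0:ℝ)..1, exp (-2 * u * t) = rFun (-u) := by
  rcases eq_or_ne u 0 with rfl | hu
  · simp [rFun]
  have key := intervalIntegral.mul_integral_comp_mul_left (f := exp) (a := 0) (b := 1) (-2 * u)
  rw [integral_exp, mul_zero, mul_one, exp_zero] at key
  rw [rFun, if_neg (neg_ne_zero.mpr hu), eq_div_iff_mul_eq (neg_ne_zero.mpr hu),
    show 2 * -u = -2 * u by ring]
  linear_combination key

lemma exp_two_mul_mul_rFun_neg (u : ℝ) : exp (2 * u) * rFun (-u) = rFun u := by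
  rcases eq_or_ne u 0 with rfl | hu
  · simp [rFun]
  rw [rFun, rFun, if_neg hu, if_neg (neg_ne_zero.mpr hu), mul_div_assoc', mul_sub, ← exp_add]
  field_simp
  ring_nf
  simp

namespace stepDrift

variable (μf : ℤ → ℝ)

lemma eq_of_mem_Ioc {k : ℤ} {z : ℝ} (hz : z ∈ Ioc (k : ℝ) (k + 1)) : stepDrift μf z = μf k := by
  have hceil : ⌈z⌉ = k + 1 := by
    rw [Int.ceil_eq_iff]
    push_cast
    exact ⟨by linarith [hz.1], hz.2⟩
  simp [stepDrift, hceil]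

lemma measurable : Measurable (stepDrift μf) :=
  measurable_from_top.comp (Int.measurable_ceil.sub measurable_const)

lemma intervalIntegrable (a b : ℝ) : IntervalIntegrable (stepDrift μf) volume a b := by
  rw [intervalIntegrable_iff]
  -- on `(a, b]` the drift only takes the finitely many values `μf (k - 1)`, `k ∈ F`
  let F := Finset.Icc ⌈min a b⌉ ⌈max a b⌉
  refine Measure.integrableOn_of_bounded (M := ∑ k ∈ F, |μf (k - 1)|)
    (by simp [uIoc]) (measurable μf).aestronglyMeasurable ?_
  refine ae_restrict_of_forall_mem measurableSet_uIoc fun x hx => ?_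
  have hmem : ⌈x⌉ ∈ F := Finset.mem_Icc.mpr ⟨Int.ceil_le_ceil hx.1.le, Int.ceil_le_ceil hx.2⟩
  exact Finset.single_le_sum (f := fun k => |μf (k - 1)|) (fun _ _ => abs_nonneg _) hmem

end stepDrift

noncomputable def driftPrimitive (μf : ℤ → ℝ) (y : ℝ) : ℝ := ∫ z in (0:ℝ)..y, stepDrift μf z

namespace driftPrimitive

variable (μf : ℤ → ℝ)

lemma continuous : Continuous (driftPrimitive μf) :=
  intervalIntegral.continuous_primitive (stepDrift.intervalIntegrable μf) 0

lemma eq_of_mem_Icc {k : ℤ} {y : ℝ} (hy : y ∈ Icc (k : ℝ) (k + 1)) :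
    driftPrimitive μf y = driftPrimitive μf k + μf k * (y - k) := by
  have hsub : driftPrimitive μf y - driftPrimitive μf k = ∫ z in (k:ℝ)..y, stepDrift μf z :=
    intervalIntegral.integral_interval_sub_left (stepDrift.intervalIntegrable μf 0 y)
      (stepDrift.intervalIntegrable μf 0 k)
  have hconst : ∫ z in (k:ℝ)..y, stepDrift μf z = ∫ _ in (k:ℝ)..y, μf k := by
    refine intervalIntegral.integral_congr_ae (Filter.Eventually.of_forall fun z hz => ?_)
    rw [uIoc_of_le hy.1] at hz
    exact stepDrift.eq_of_mem_Ioc μf ⟨hz.1, hz.2.trans hy.2⟩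
  rw [hconst, intervalIntegral.integral_const, smul_eq_mul] at hsub
  linarith

lemma succ (k : ℤ) : driftPrimitive μf (k + 1) = driftPrimitive μf k + μf k := by
  simpa using eq_of_mem_Icc μf (y := k + 1) ⟨by linarith, le_rfl⟩

end driftPrimitive

namespace scaleFn

variable (μf : ℤ → ℝ)

lemma sub_eq_integral (a b : ℝ) :
    scaleFn μf b - scaleFn μf a = 2 * ∫ y in a..b, exp (-2 * driftPrimitive μf y) := by
  have hint (c : ℝ) : IntervalIntegrable (fun y => exp (-2 * driftPrimitive μf y)) volume 0 c :=
    (continuous_exp.comp (continuous_const.mul (driftPrimitive.continuous μf))).intervalIntegrable _ _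
  rw [scaleFn, scaleFn, ← mul_sub]
  exact congrArg (2 * ·) (intervalIntegral.integral_interval_sub_left (hint b) (hint a))

lemma succ_sub_eq (k : ℤ) :
    scaleFn μf (k + 1) - scaleFn μf k = exp (-2 * driftPrimitive μf k) * rFun (-μf k) := by
  have hcell : ∫ y in (k:ℝ)..k + 1, exp (-2 * driftPrimitive μf y) =
      ∫ y in (k:ℝ)..k + 1, exp (-2 * driftPrimitive μf k) * exp (-2 * μf k * (y - k)) := by
    refine intervalIntegral.integral_congr fun y hy => ?_
    rw [uIcc_of_le (by linarith)] at hy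
    rw [driftPrimitive.eq_of_mem_Icc μf hy, ← exp_add]
    ring_nf
  rw [sub_eq_integral, hcell, intervalIntegral.integral_const_mul,
    intervalIntegral.integral_comp_sub_right (fun t => exp (-2 * μf k * t)), sub_self,
    add_sub_cancel_left, ← two_mul_integral_exp_neg_two_mul]
  ring

end scaleFn

/-- For the diffusion `dW = dB + μ(W)dt` with piecewise constant drift `μf j`
on `(j, j+1]`, the probability that `W` started at `j` hits `j+1` before
`j-1`, namely `(S(j) - S(j-1))/(S(j+1) - S(j-1))` in terms of the scale
function, equals `r(μ_{j-1}) / (r(μ_{j-1}) + r(-μ_j))`. -/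
theorem stmt_18 (μf : ℤ → ℝ) (j : ℤ) :
    (scaleFn μf j - scaleFn μf ((j : ℝ) - 1)) /
      (scaleFn μf ((j : ℝ) + 1) - scaleFn μf ((j : ℝ) - 1)) =
    rFun (μf (j - 1)) / (rFun (μf (j - 1)) + rFun (-(μf j))) := by
  have hcast : ((j - 1 : ℤ) : ℝ) = j - 1 := by push_cast; ring
  have hleft := scaleFn.succ_sub_eq μf (j - 1)
  have hright := scaleFn.succ_sub_eq μf j
  have hdrift := driftPrimitive.succ μf (j - 1)
  rw [hcast, sub_add_cancel] at hleft hdrift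
  rw [hdrift, mul_add, exp_add] at hright
  set E := exp (-2 * driftPrimitive μf (j - 1))
  set m := μf (j - 1)
  have hnum : scaleFn μf j - scaleFn μf (j - 1) = E * exp (-2 * m) * rFun m := by
    rw [hleft, ← exp_two_mul_mul_rFun_neg m, ← mul_assoc, mul_assoc E, ← exp_add]
    simp
  have hden : scaleFn μf (j + 1) - scaleFn μf (j - 1) =
      E * exp (-2 * m) * (rFun m + rFun (-μf j)) := by
    rw [show scaleFn μf (j + 1) - scaleFn μf (j - 1) = (scaleFn μf (j + 1) - scaleFn μf j) +
      (scaleFn μf j - scaleFn μf (j - 1)) by ring, hnum, hright]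
    ring
  rw [hnum, hden, mul_div_mul_left _ _ (by positivity)]
end
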